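/- arXiv:2102.02960 — 7 statements merged into one kernel-verified Lean document; each statement's English description precedes it below -/
import Mathlib

section
/- Let V be a real inner product space with inner product ⟨·,·⟩ and norm ‖·‖. Let k ≥ 0 be an integer, σ ∈ [1/2, 1], and let c_0, c_1, …, c_k be reals with 0 < c_k < c_{k−1} < ⋯ < c_0 and, if k ≥ 1, (2σ−1)c_0 − σc_1 ≥ 0. Then for any v^0, v^1, …, v^{k+1} ∈ V: Σ_{l=0}^{k} c_l ⟨v^{k−l+1} − v^{k−l}, σv^{k+1} + (1−σ)v^k⟩ ≥ (1/2) Σ_{l=0}^{k} c_l (‖v^{k−l+1}‖² − ‖v^{k−l}‖²). -/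
/-!
Write `u = σ v^{k+1} + (1 - σ) v^k`. By the polarization identity each summand equals
`c_l (‖u - v^{k-l}‖² - ‖u - v^{k-l+1}‖²) / 2`, so the claim becomes `∑ c_l (b_{l+1} - b_l) ≥ 0`
for the nonnegative numbers `b_l = ‖u - v^{k+1-l}‖²`. Summation by parts against the decreasing
weights `c_l` reduces this to `(c_0 - c_1) b_1 ≥ c_0 b_0`, and since `b_0 = (1 - σ)² ‖δ‖²` and
`b_1 = σ² ‖δ‖²` with `δ = v^{k+1} - v^k`, this is `((2σ - 1) c_0 - σ² c_1) ‖δ‖² ≥ 0`.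
-/

open Finset

lemma real_inner_sub_sub_half_norm_sq {V : Type*} [NormedAddCommGroup V] [InnerProductSpace ℝ V]
    (x y u : V) :
    inner ℝ (x - y) u - (‖x‖ ^ 2 - ‖y‖ ^ 2) / 2 = (‖u - y‖ ^ 2 - ‖u - x‖ ^ 2) / 2 := by
  rw [norm_sub_sq_real, norm_sub_sq_real, inner_sub_left, real_inner_comm u x,
    real_inner_comm u y]
  ring

section ConvexCombination

variable {E : Type*} [SeminormedAddCommGroup E] [NormedSpace ℝ E] (σ : ℝ) (x y : E)

lemma norm_smul_add_one_sub_smul_sub_left_sq :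
    ‖σ • x + (1 - σ) • y - x‖ ^ 2 = (1 - σ) ^ 2 * ‖x - y‖ ^ 2 := by
  have : σ • x + (1 - σ) • y - x = (1 - σ) • (y - x) := by module
  rw [this, norm_smul, norm_sub_rev y, mul_pow, Real.norm_eq_abs, sq_abs]

lemma norm_smul_add_one_sub_smul_sub_right_sq :
    ‖σ • x + (1 - σ) • y - y‖ ^ 2 = σ ^ 2 * ‖x - y‖ ^ 2 := by
  have : σ • x + (1 - σ) • y - y = σ • (x - y) := by module
  rw [this, norm_smul, mul_pow, Real.norm_eq_abs, sq_abs]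

end ConvexCombination

lemma sub_le_sum_range_mul_sub {c b : ℕ → ℝ} (hb : ∀ j, 0 ≤ b j) :
    ∀ n, (∀ j < n, c (j + 1) ≤ c j) →
      c n * b (n + 1) - c 0 * b 0 ≤ ∑ i ∈ range (n + 1), c i * (b (i + 1) - b i)
  | 0, _ => by simp only [zero_add, sum_range_one]; linarith
  | n + 1, hc => by
    have ih := sub_le_sum_range_mul_sub hb n fun j hj => hc j (by omega)
    have hn : 0 ≤ (c n - c (n + 1)) * b (n + 1) :=
      mul_nonneg (sub_nonneg.2 (hc n n.lt_succ_self)) (hb _)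
    rw [sum_range_succ]
    linarith

lemma alikhanov_sum_range_mul_sub_nonneg {k : ℕ} {σ : ℝ} (hσ : σ ∈ Set.Icc (1/2 : ℝ) 1) {c : ℕ → ℝ}
    (hck : 0 ≤ c k) (hmono : ∀ l < k, c (l + 1) ≤ c l)
    (hc01 : 1 ≤ k → (2 * σ - 1) * c 0 - σ * c 1 ≥ 0)
    {b : ℕ → ℝ} (hb : ∀ j, 0 ≤ b j) {s : ℝ} (hs : 0 ≤ s)
    (hb0 : b 0 = (1 - σ) ^ 2 * s) (hb1 : b 1 = σ ^ 2 * s) :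
    0 ≤ ∑ l ∈ range (k + 1), c l * (b (l + 1) - b l) := by
  obtain ⟨hσ₀, hσ₁⟩ := hσ
  rcases k with _ | k
  · simp only [zero_add, sum_range_one, hb0, hb1]
    nlinarith [mul_nonneg (mul_nonneg hck hs) (by linarith : 0 ≤ 2 * σ - 1)]
  · have hc1 : c (k + 1) ≤ c 1 :=
      (antitoneOn_of_succ_le Set.ordConnected_Iic fun a _ _ ha =>
        hmono a (Order.succ_le_iff.1 ha)) (by simp) (by simp) (by omega)
    have htail := sub_le_sum_range_mul_sub (c := fun i => c (i + 1)) (fun j => hb (j + 1)) k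
      fun j hj => hmono (j + 1) (by omega)
    have hσc1 : 0 ≤ σ * (1 - σ) * c 1 :=
      mul_nonneg (mul_nonneg (by linarith) (by linarith)) (hck.trans hc1)
    have hmain : 0 ≤ ((2 * σ - 1) * c 0 - σ ^ 2 * c 1) * s :=
      mul_nonneg (by linarith [hc01 (by omega)]) hs
    rw [sum_range_succ', zero_add, hb0, hb1]
    rw [zero_add, hb1] at htail
    nlinarith [mul_nonneg hck (hb (k + 2))]

/-- Alikhanov's inequality: let `V` be a real inner product space, `k ≥ 0`,
`σ ∈ [1/2, 1]`, and `c_0 > c_1 > ⋯ > c_k > 0` reals with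
`(2σ−1)c_0 − σc_1 ≥ 0` when `k ≥ 1`. Then for any `v^0, …, v^{k+1} ∈ V`,
`Σ_{l=0}^{k} c_l ⟨v^{k−l+1} − v^{k−l}, σv^{k+1} + (1−σ)v^k⟩
  ≥ (1/2) Σ_{l=0}^{k} c_l (‖v^{k−l+1}‖² − ‖v^{k−l}‖²)`. -/
theorem stmt_6 {V : Type*} [NormedAddCommGroup V] [InnerProductSpace ℝ V]
    (k : ℕ) (σ : ℝ) (hσ : σ ∈ Set.Icc (1/2 : ℝ) 1)
    (c : ℕ → ℝ) (hck : 0 < c k) (hmono : ∀ l < k, c (l + 1) < c l)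
    (hc01 : 1 ≤ k → (2*σ - 1) * c 0 - σ * c 1 ≥ 0)
    (v : ℕ → V) :
    ∑ l ∈ Finset.range (k + 1),
        c l * (inner ℝ (v (k - l + 1) - v (k - l)) (σ • v (k + 1) + (1 - σ) • v k) : ℝ)
      ≥ (1/2) * ∑ l ∈ Finset.range (k + 1),
          c l * (‖v (k - l + 1)‖ ^ 2 - ‖v (k - l)‖ ^ 2) := by
  set u := σ • v (k + 1) + (1 - σ) • v k
  set b : ℕ → ℝ := fun l => ‖u - v (k + 1 - l)‖ ^ 2
  have hsum : ∑ l ∈ range (k + 1), c l * inner ℝ (v (k - l + 1) - v (k - l)) u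
      - (1/2) * ∑ l ∈ range (k + 1), c l * (‖v (k - l + 1)‖ ^ 2 - ‖v (k - l)‖ ^ 2)
      = (1/2) * ∑ l ∈ range (k + 1), c l * (b (l + 1) - b l) := by
    rw [mul_sum, mul_sum, ← sum_sub_distrib]
    refine sum_congr rfl fun l hl => ?_
    have hkl : k - l + 1 = k + 1 - l := by have := mem_range.1 hl; omega
    have := real_inner_sub_sub_half_norm_sq (v (k - l + 1)) (v (k - l)) u
    simp only [b, hkl, Nat.add_sub_add_right] at this ⊢
    linear_combination c l * this
  have hb0 : b 0 = (1 - σ) ^ 2 * ‖v (k + 1) - v k‖ ^ 2 :=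
    norm_smul_add_one_sub_smul_sub_left_sq σ (v (k + 1)) (v k)
  have hb1 : b 1 = σ ^ 2 * ‖v (k + 1) - v k‖ ^ 2 := by
    simp only [b, Nat.add_sub_cancel]
    exact norm_smul_add_one_sub_smul_sub_right_sq σ (v (k + 1)) (v k)
  have := alikhanov_sum_range_mul_sub_nonneg hσ hck.le (fun l hl => (hmono l hl).le) hc01
    (b := b) (fun _ => sq_nonneg _) (sq_nonneg _) hb0 hb1
  linarith
end

section
/- On the space °U of grid functions vanishing on the boundary of the d-dimensional grid, the map (u, w) ↦ (A_h u, −Δ_h w) is an inner product: it is bilinear, symmetric, and (A_h u, −Δ_h u) > 0 for every nonzero u ∈ °U. -/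
open Classical

noncomputable section

/-- an index `j` is interior if `1 ≤ j k ≤ m k − 1` in every coordinate. -/
def interiorIdx (d : ℕ) (m : Fin d → ℕ) (j : Fin d → ℕ) : Prop :=
  ∀ k, 1 ≤ j k ∧ j k ≤ m k - 1

/-- the shift `j + δ_k`. -/
def up {d : ℕ} (k : Fin d) (j : Fin d → ℕ) : Fin d → ℕ :=
  Function.update j k (j k + 1)

/-- the shift `j − δ_k`. -/
def down {d : ℕ} (k : Fin d) (j : Fin d → ℕ) : Fin d → ℕ :=
  Function.update j k (j k - 1)

/-- the second difference operator `δ_k²`. -/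
def d2 {d : ℕ} (Δx : Fin d → ℝ) (k : Fin d) (u : (Fin d → ℕ) → ℝ) : (Fin d → ℕ) → ℝ :=
  fun j => (u (up k j) - 2 * u j + u (down k j)) / (Δx k) ^ 2

/-- the averaging operator `A_k` (identity at boundary indices). -/
def Aop {d : ℕ} (m : Fin d → ℕ) (k : Fin d) (u : (Fin d → ℕ) → ℝ) : (Fin d → ℕ) → ℝ :=
  fun j => if interiorIdx d m j then (u (down k j) + 10 * u j + u (up k j)) / 12 else u j

/-- the discrete Laplacian `Δ_h = Σ_k δ_k²`. -/
def lapH {d : ℕ} (Δx : Fin d → ℝ) (u : (Fin d → ℕ) → ℝ) : (Fin d → ℕ) → ℝ :=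
  fun j => ∑ k, d2 Δx k u j

/-- the compact operator `A_h = ∏_k A_k`. -/
def Ah {d : ℕ} (m : Fin d → ℕ) (u : (Fin d → ℕ) → ℝ) : (Fin d → ℕ) → ℝ :=
  (List.finRange d).foldr (fun k v => Aop m k v) u

/-- the operator `Λ_h = Σ_k (∏_{l≠k} A_l) δ_k²`. -/
def LamH {d : ℕ} (m : Fin d → ℕ) (Δx : Fin d → ℝ) (u : (Fin d → ℕ) → ℝ) :
    (Fin d → ℕ) → ℝ :=
  fun j => ∑ k,
    ((List.finRange d).foldr (fun l v => if l = k then v else Aop m l v) (d2 Δx k u)) j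

/-- the discrete inner product `(u,w) = (∏_r Δx^{(r)}) Σ_{j interior} u_j w_j`. -/
def ip {d : ℕ} (m : Fin d → ℕ) (Δx : Fin d → ℝ) (u w : (Fin d → ℕ) → ℝ) : ℝ :=
  (∏ r, Δx r) * ∑ j ∈ Fintype.piFinset (fun k => Finset.Icc 1 (m k - 1)), u j * w j

/-- membership in `°U`: the grid function vanishes at every non-interior index. -/
def zeroBnd {d : ℕ} (m : Fin d → ℕ) (u : (Fin d → ℕ) → ℝ) : Prop :=
  ∀ j, ¬ interiorIdx d m j → u j = 0

/-- the squared seminorm `|u|²_{1,k}`. -/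
def semi1sq {d : ℕ} (m : Fin d → ℕ) (Δx : Fin d → ℝ) (k : Fin d)
    (u : (Fin d → ℕ) → ℝ) : ℝ :=
  (∏ r, Δx r) *
    ∑ j ∈ Fintype.piFinset
      (fun l => if l = k then Finset.range (m l) else Finset.Icc 1 (m l - 1)),
      ((u (up k j) - u j) / Δx k) ^ 2

/-- the squared seminorm `|u|₁² = Σ_k |u|²_{1,k}`. -/
def norm1sq {d : ℕ} (m : Fin d → ℕ) (Δx : Fin d → ℝ) (u : (Fin d → ℕ) → ℝ) : ℝ :=
  ∑ k, semi1sq m Δx k u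

/-
Identify `°U` with `ℝ^{interior}`. By summation by parts the unscaled second difference
`D_k` is symmetric, with `-4 ≤ D_k < 0`; strictness comes from a point of the support of `u`
with maximal `k`-th coordinate, where `u(j + δ_k) - u(j) = -u(j) ≠ 0`. Hence `A_k = 1 + D_k / 12`
and `-Δ_h = -Σ_k D_k / (Δx^{(k)})²` are positive definite. The `D_k` commute, so `A_h` and `-Δ_h`
are commuting positive definite symmetric operators; then `(A_h u, -Δ_h w)` is symmetric, and
positive on the diagonal because a product of commuting positive definite operators is positive
definite (its eigenvalues are positive).
-/

open RealInnerProductSpace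

namespace LinearMap

variable {F : Type*} [NormedAddCommGroup F] [InnerProductSpace ℝ F]

def IsPositiveDefinite (T : F →ₗ[ℝ] F) : Prop :=
  T.IsSymmetric ∧ ∀ x, x ≠ 0 → 0 < ⟪T x, x⟫

lemma IsSymmetric.inner_map_map_comm {S T : F →ₗ[ℝ] F} (hS : S.IsSymmetric)
    (hT : T.IsSymmetric) (hST : Commute S T) (x y : F) : ⟪S x, T y⟫ = ⟪S y, T x⟫ := by
  rw [hS, ← Module.End.mul_apply, hST, Module.End.mul_apply, ← hT, real_inner_comm]

lemma IsPositiveDefinite.one : (1 : F →ₗ[ℝ] F).IsPositiveDefinite :=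
  ⟨IsSymmetric.one, fun _ hx => real_inner_self_pos.2 hx⟩

variable [FiniteDimensional ℝ F] {n : ℕ}

lemma IsSymmetric.inner_map_self_eq_sum_eigenvalues {T : F →ₗ[ℝ] F} (hT : T.IsSymmetric)
    (hn : Module.finrank ℝ F = n) (x : F) :
    ⟪T x, x⟫ = ∑ i, hT.eigenvalues hn i * (hT.eigenvectorBasis hn).repr x i ^ 2 := by
  rw [← (hT.eigenvectorBasis hn).repr.inner_map_map, PiLp.inner_apply]
  simp [hT.eigenvectorBasis_apply_self_apply, sq, mul_left_comm]

lemma IsSymmetric.isPositiveDefinite_of_eigenvalues_pos {T : F →ₗ[ℝ] F} (hT : T.IsSymmetric)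
    (hn : Module.finrank ℝ F = n) (hpos : ∀ i, 0 < hT.eigenvalues hn i) :
    T.IsPositiveDefinite := by
  refine ⟨hT, fun x hx => ?_⟩
  obtain ⟨i, hi⟩ : ∃ i, (hT.eigenvectorBasis hn).repr x i ≠ 0 := by
    by_contra! h
    exact hx ((hT.eigenvectorBasis hn).repr.map_eq_zero_iff.1 (by ext i; simp [h i]))
  rw [hT.inner_map_self_eq_sum_eigenvalues hn]
  exact Finset.sum_pos' (fun j _ => mul_nonneg (hpos j).le (sq_nonneg _))
    ⟨i, Finset.mem_univ _, mul_pos (hpos i) (by positivity)⟩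

/-- An eigenvalue `μ` of `S * T` with eigenvector `v` satisfies
`⟪S (T v), T v⟫ = μ * ⟪T v, v⟫`, and both inner products are positive. -/
lemma IsPositiveDefinite.mul_of_commute {S T : F →ₗ[ℝ] F} (hS : S.IsPositiveDefinite)
    (hT : T.IsPositiveDefinite) (hST : Commute S T) : (S * T).IsPositiveDefinite := by
  have hR := hS.1.mul_of_commute hT.1 hST
  refine hR.isPositiveDefinite_of_eigenvalues_pos rfl fun i => ?_
  set v := hR.eigenvectorBasis rfl i
  have hv : v ≠ 0 := (hR.eigenvectorBasis rfl).orthonormal.ne_zero i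
  have hTv : T v ≠ 0 := fun h => by simpa [h] using hT.2 v hv
  have key : ⟪S (T v), T v⟫ = hR.eigenvalues rfl i * ⟪T v, v⟫ := by
    rw [← Module.End.mul_apply, hR.apply_eigenvectorBasis, real_inner_smul_left, real_inner_comm]
    rfl
  have hpos := hS.2 _ hTv
  rw [key] at hpos
  exact (pos_iff_pos_of_mul_pos hpos).2 (hT.2 v hv)

end LinearMap

namespace Grid

variable {d : ℕ}

@[simp] lemma up_apply_self (k : Fin d) (j : Fin d → ℕ) : up k j k = j k + 1 := by
  simp [up]

@[simp] lemma down_apply_self (k : Fin d) (j : Fin d → ℕ) : down k j k = j k - 1 := by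
  simp [down]

lemma up_apply_of_ne {k l : Fin d} (h : l ≠ k) (j : Fin d → ℕ) : up k j l = j l := by
  simp [up, h]

lemma down_apply_of_ne {k l : Fin d} (h : l ≠ k) (j : Fin d → ℕ) : down k j l = j l := by
  simp [down, h]

@[simp] lemma down_up (k : Fin d) (j : Fin d → ℕ) : down k (up k j) = j := by
  simp [up, down]

lemma up_down (k : Fin d) {j : Fin d → ℕ} (h : 1 ≤ j k) : up k (down k j) = j := by
  ext l
  rcases eq_or_ne l k with rfl | hl
  · simp only [up_apply_self, down_apply_self]; omega
  · simp [up_apply_of_ne hl, down_apply_of_ne hl]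

lemma up_injective (k : Fin d) : Function.Injective (up k) :=
  Function.LeftInverse.injective (down_up k)

lemma up_comm (k l : Fin d) (j : Fin d → ℕ) : up k (up l j) = up l (up k j) := by
  rcases eq_or_ne k l with rfl | h
  · rfl
  · simp only [up, Function.update_of_ne h, Function.update_of_ne h.symm]
    exact (Function.update_comm h _ _ _).symm

lemma down_comm (k l : Fin d) (j : Fin d → ℕ) : down k (down l j) = down l (down k j) := by
  rcases eq_or_ne k l with rfl | h
  · rfl
  · simp only [down, Function.update_of_ne h, Function.update_of_ne h.symm]
    exact (Function.update_comm h _ _ _).symm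

lemma up_down_comm {k l : Fin d} (h : k ≠ l) (j : Fin d → ℕ) :
    up k (down l j) = down l (up k j) := by
  simp only [up, down, Function.update_of_ne h, Function.update_of_ne h.symm]
  exact (Function.update_comm h _ _ _).symm

variable (m : Fin d → ℕ)

def interior : Finset (Fin d → ℕ) := Fintype.piFinset fun k => Finset.Icc 1 (m k - 1)

def grid : Finset (Fin d → ℕ) := Fintype.piFinset fun k => Finset.range (m k + 1)

variable {m}

lemma mem_interior {j : Fin d → ℕ} : j ∈ interior m ↔ interiorIdx d m j := by
  simp [interior, interiorIdx]

lemma mem_interior_of_eq_off {p q : Fin d → ℕ} {l : Fin d} (hq : q ∈ interior m)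
    (hpq : ∀ r, r ≠ l → p r = q r) (hl : p l ∈ Finset.Icc 1 (m l - 1)) : p ∈ interior m := by
  rw [interior, Fintype.mem_piFinset] at hq ⊢
  intro r
  rcases eq_or_ne r l with rfl | hr
  · exact hl
  · rw [hpq r hr]; exact hq r

lemma interior_subset_grid : interior m ⊆ grid m := by
  intro j hj
  simp only [interior, grid, Fintype.mem_piFinset, Finset.mem_Icc, Finset.mem_range] at hj ⊢
  exact fun k => by have := hj k; omega

lemma interior_subset_image_up (k : Fin d) : interior m ⊆ (grid m).image (up k) := by
  intro j hj
  have hk : 1 ≤ j k := (Fintype.mem_piFinset.1 hj k |> Finset.mem_Icc.1).1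
  refine Finset.mem_image.2 ⟨down k j, ?_, up_down k hk⟩
  have hg := interior_subset_grid hj
  simp only [grid, Fintype.mem_piFinset, Finset.mem_range] at hg ⊢
  intro r
  rcases eq_or_ne r k with rfl | hr
  · have := hg r; simp only [down_apply_self]; omega
  · rw [down_apply_of_ne hr]; exact hg r

lemma sum_eq_sum_interior {f : (Fin d → ℕ) → ℝ} (hf : zeroBnd m f) {s : Finset (Fin d → ℕ)}
    (hs : interior m ⊆ s) : ∑ j ∈ s, f j = ∑ j ∈ interior m, f j :=
  (Finset.sum_subset hs fun j _ hj => hf j (mt mem_interior.2 hj)).symm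

lemma sum_grid_comp_up {f : (Fin d → ℕ) → ℝ} (hf : zeroBnd m f) (k : Fin d) :
    ∑ j ∈ grid m, f (up k j) = ∑ j ∈ grid m, f j := by
  rw [← Finset.sum_image (up_injective k).injOn,
    sum_eq_sum_interior hf (interior_subset_image_up k),
    sum_eq_sum_interior hf interior_subset_grid]

lemma mem_interior_of_ne_zero {u : (Fin d → ℕ) → ℝ} (hu : zeroBnd m u) {j : Fin d → ℕ}
    (h : u j ≠ 0) : j ∈ interior m :=
  by_contra fun hj => h (hu j (mt mem_interior.2 hj))

lemma exists_ne_zero_up_eq_zero {u : (Fin d → ℕ) → ℝ} (hu : zeroBnd m u) (hne : u ≠ 0)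
    (k : Fin d) : ∃ j ∈ interior m, u j ≠ 0 ∧ u (up k j) = 0 := by
  obtain ⟨j₀, hj₀⟩ := Function.ne_iff.1 hne
  obtain ⟨j, hj, hmax⟩ := ((interior m).filter fun j => u j ≠ 0).exists_max_image (fun j => j k)
    ⟨j₀, Finset.mem_filter.2 ⟨mem_interior_of_ne_zero hu hj₀, hj₀⟩⟩
  rw [Finset.mem_filter] at hj
  refine ⟨j, hj.1, hj.2, by_contra fun hup => ?_⟩
  have := hmax (up k j) (Finset.mem_filter.2 ⟨mem_interior_of_ne_zero hu hup, hup⟩)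
  simp at this

variable (m) in
/-- `°U`, identified with the functions on the interior indices. -/
abbrev Space : Type := EuclideanSpace ℝ (interior m)

variable (m) in
def extendByZero : Space m →ₗ[ℝ] (Fin d → ℕ) → ℝ where
  toFun x j := if h : j ∈ interior m then x ⟨j, h⟩ else 0
  map_add' x y := by ext j; by_cases h : j ∈ interior m <;> simp [h]
  map_smul' c x := by ext j; by_cases h : j ∈ interior m <;> simp [h]

variable (m) in
def restrict : ((Fin d → ℕ) → ℝ) →ₗ[ℝ] Space m where
  toFun u := WithLp.toLp 2 fun i => u i
  map_add' _ _ := rfl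
  map_smul' _ _ := rfl

lemma extendByZero_of_mem (x : Space m) {j : Fin d → ℕ} (h : j ∈ interior m) :
    extendByZero m x j = x ⟨j, h⟩ := dif_pos h

lemma extendByZero_of_notMem (x : Space m) {j : Fin d → ℕ} (h : j ∉ interior m) :
    extendByZero m x j = 0 := dif_neg h

@[simp] lemma extendByZero_coe (x : Space m) (i : interior m) : extendByZero m x i = x i :=
  extendByZero_of_mem x i.2

@[simp] lemma restrict_apply (u : (Fin d → ℕ) → ℝ) (i : interior m) : restrict m u i = u i := rfl

lemma zeroBnd_extendByZero (x : Space m) : zeroBnd m (extendByZero m x) :=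
  fun _ h => extendByZero_of_notMem x (mt mem_interior.1 h)

@[simp] lemma restrict_extendByZero (x : Space m) : restrict m (extendByZero m x) = x := by
  ext i; simp

lemma exists_extendByZero_eq {u : (Fin d → ℕ) → ℝ} (hu : zeroBnd m u) :
    ∃ x, extendByZero m x = u := by
  refine ⟨restrict m u, funext fun j => ?_⟩
  by_cases h : j ∈ interior m
  · rw [extendByZero_of_mem _ h]; rfl
  · rw [extendByZero_of_notMem _ h, hu j (mt mem_interior.2 h)]

lemma inner_restrict (u w : (Fin d → ℕ) → ℝ) :
    ⟪restrict m u, restrict m w⟫ = ∑ j ∈ interior m, u j * w j := by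
  simp [PiLp.inner_apply, mul_comm, ← Finset.sum_coe_sort (interior m)]

lemma inner_eq_sum_grid (x y : Space m) :
    ⟪x, y⟫ = ∑ j ∈ grid m, extendByZero m x j * extendByZero m y j := by
  conv_lhs => rw [← restrict_extendByZero x, ← restrict_extendByZero y]
  rw [inner_restrict, sum_eq_sum_interior _ interior_subset_grid]
  exact fun j hj => by rw [zeroBnd_extendByZero x j hj, zero_mul]

lemma ip_eq_inner (Δx : Fin d → ℝ) (u w : (Fin d → ℕ) → ℝ) :
    ip m Δx u w = (∏ r, Δx r) * ⟪restrict m u, restrict m w⟫ := by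
  rw [inner_restrict]; rfl

variable (m) in
/-- The second difference `u(j + δ_k) - 2 u(j) + u(j - δ_k)` on `°U`, without the factor
`1 / (Δx^{(k)})²`. -/
def secondDiff (k : Fin d) : Module.End ℝ (Space m) where
  toFun x := WithLp.toLp 2 fun i =>
    extendByZero m x (up k i) - 2 * extendByZero m x i + extendByZero m x (down k i)
  map_add' x y := by ext i; simp only [map_add, Pi.add_apply, PiLp.add_apply, extendByZero_coe]; ring
  map_smul' c x := by
    ext i
    simp only [map_smul, Pi.smul_apply, PiLp.smul_apply, smul_eq_mul, extendByZero_coe,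
      RingHom.id_apply]
    ring

lemma secondDiff_apply (k : Fin d) (x : Space m) (i : interior m) :
    secondDiff m k x i =
      extendByZero m x (up k i) - 2 * extendByZero m x i + extendByZero m x (down k i) := rfl

lemma extendByZero_secondDiff {l : Fin d} (x : Space m) {p : Fin d → ℕ}
    (hp : p l ∈ Finset.Icc 1 (m l - 1)) :
    extendByZero m (secondDiff m l x) p =
      extendByZero m x (up l p) - 2 * extendByZero m x p + extendByZero m x (down l p) := by
  by_cases h : p ∈ interior m
  · rw [extendByZero_of_mem _ h, secondDiff_apply]
  · have hup : up l p ∉ interior m := fun hq =>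
      h (mem_interior_of_eq_off hq (fun r hr => (up_apply_of_ne hr p).symm) hp)
    have hdown : down l p ∉ interior m := fun hq =>
      h (mem_interior_of_eq_off hq (fun r hr => (down_apply_of_ne hr p).symm) hp)
    simp [extendByZero_of_notMem _ h, extendByZero_of_notMem _ hup, extendByZero_of_notMem _ hdown]

lemma inner_secondDiff (k : Fin d) (x y : Space m) :
    ⟪secondDiff m k x, y⟫ = ∑ j ∈ grid m, (extendByZero m x (up k j) * extendByZero m y j
      + extendByZero m x j * extendByZero m y (up k j)
      - 2 * extendByZero m x j * extendByZero m y j) := by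
  set X := extendByZero m x
  set Y := extendByZero m y
  have hY : zeroBnd m Y := zeroBnd_extendByZero y
  have hterm : ∀ j ∈ grid m, extendByZero m (secondDiff m k x) j * Y j
      = (X (up k j) * Y j - 2 * X j * Y j) + X (down k j) * Y j := by
    intro j _
    by_cases h : j ∈ interior m
    · rw [extendByZero_of_mem _ h, secondDiff_apply]; ring
    · rw [hY j (mt mem_interior.2 h)]; ring
  have hshift : ∑ j ∈ grid m, X (down k j) * Y j = ∑ j ∈ grid m, X j * Y (up k j) := by
    rw [← sum_grid_comp_up (f := fun j => X (down k j) * Y j)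
      (fun j hj => by simp only [hY j hj, mul_zero]) k]
    simp only [down_up]
  rw [inner_eq_sum_grid, Finset.sum_congr rfl hterm, Finset.sum_add_distrib, hshift,
    ← Finset.sum_add_distrib]
  exact Finset.sum_congr rfl fun j _ => by ring

lemma isSymmetric_secondDiff (k : Fin d) : (secondDiff m k).IsSymmetric := fun x y => by
  rw [real_inner_comm (secondDiff m k y) x, inner_secondDiff, inner_secondDiff]
  exact Finset.sum_congr rfl fun j _ => by ring

lemma sum_grid_extendByZero_up_sq (k : Fin d) (x : Space m) :
    ∑ j ∈ grid m, extendByZero m x (up k j) ^ 2 = ∑ j ∈ grid m, extendByZero m x j ^ 2 :=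
  sum_grid_comp_up (f := fun j => extendByZero m x j ^ 2)
    (fun j hj => by simp [zeroBnd_extendByZero x j hj]) k

lemma inner_secondDiff_self (k : Fin d) (x : Space m) :
    ⟪secondDiff m k x, x⟫ =
      -∑ j ∈ grid m, (extendByZero m x (up k j) - extendByZero m x j) ^ 2 := by
  have hsq := sum_grid_extendByZero_up_sq k x
  set X := extendByZero m x
  calc ⟪secondDiff m k x, x⟫
      = ∑ j ∈ grid m, (X (up k j) * X j + X j * X (up k j) - 2 * X j * X j)
        + (∑ j ∈ grid m, X j ^ 2 - ∑ j ∈ grid m, X (up k j) ^ 2) := by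
        rw [hsq, sub_self, add_zero, inner_secondDiff]
    _ = -∑ j ∈ grid m, (X (up k j) - X j) ^ 2 := by
        rw [← Finset.sum_sub_distrib, ← Finset.sum_add_distrib, ← Finset.sum_neg_distrib]
        exact Finset.sum_congr rfl fun j _ => by ring

lemma inner_secondDiff_self_neg (k : Fin d) {x : Space m} (hx : x ≠ 0) :
    ⟪secondDiff m k x, x⟫ < 0 := by
  have hX : extendByZero m x ≠ 0 := fun h => hx (by simpa [h] using (restrict_extendByZero x).symm)
  obtain ⟨j, hj, hj0, hup⟩ := exists_ne_zero_up_eq_zero (zeroBnd_extendByZero x) hX k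
  rw [inner_secondDiff_self, neg_lt_zero]
  exact Finset.sum_pos' (fun _ _ => sq_nonneg _)
    ⟨j, interior_subset_grid hj, by rw [hup, zero_sub, neg_sq]; positivity⟩

lemma neg_four_mul_inner_self_le_inner_secondDiff_self (k : Fin d) (x : Space m) :
    -4 * ⟪x, x⟫ ≤ ⟪secondDiff m k x, x⟫ := by
  have hsq := sum_grid_extendByZero_up_sq k x
  set X := extendByZero m x
  have hle : ∑ j ∈ grid m, (X (up k j) - X j) ^ 2
      ≤ ∑ j ∈ grid m, (2 * X (up k j) ^ 2 + 2 * X j ^ 2) :=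
    Finset.sum_le_sum fun j _ => by nlinarith [sq_nonneg (X (up k j) + X j)]
  rw [Finset.sum_add_distrib, ← Finset.mul_sum, ← Finset.mul_sum, hsq] at hle
  rw [inner_secondDiff_self, inner_eq_sum_grid]
  simp only [← sq]
  linarith

lemma commute_secondDiff (k l : Fin d) : Commute (secondDiff m k) (secondDiff m l) := by
  rcases eq_or_ne k l with rfl | hkl
  · exact Commute.refl _
  ext x i
  have hi : ∀ r, i.1 r ∈ Finset.Icc 1 (m r - 1) := Fintype.mem_piFinset.1 i.2
  simp only [Module.End.mul_apply, secondDiff_apply]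
  rw [extendByZero_secondDiff x (hi l), extendByZero_secondDiff x (hi k),
    extendByZero_secondDiff x (p := up k i) (up_apply_of_ne hkl.symm i.1 ▸ hi l),
    extendByZero_secondDiff x (p := down k i) (down_apply_of_ne hkl.symm i.1 ▸ hi l),
    extendByZero_secondDiff x (p := up l i) (up_apply_of_ne hkl i.1 ▸ hi k),
    extendByZero_secondDiff x (p := down l i) (down_apply_of_ne hkl i.1 ▸ hi k),
    up_comm l k, down_comm l k, up_down_comm hkl, up_down_comm hkl.symm]
  ring

variable (m) in
def average (k : Fin d) : Module.End ℝ (Space m) := 1 + (12 : ℝ)⁻¹ • secondDiff m k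

variable (m) in
def averageProd : Module.End ℝ (Space m) := ((List.finRange d).map (average m)).prod

variable (m) in
def laplacian (Δx : Fin d → ℝ) : Module.End ℝ (Space m) := ∑ k, (Δx k ^ 2)⁻¹ • secondDiff m k

lemma commute_average_secondDiff (k l : Fin d) : Commute (average m k) (secondDiff m l) :=
  (Commute.one_left _).add_left ((commute_secondDiff k l).smul_left _)

lemma commute_averageProd_laplacian (Δx : Fin d → ℝ) :
    Commute (averageProd m) (laplacian m Δx) :=
  Commute.list_prod_left _ _ fun _ ha => by
    obtain ⟨k, -, rfl⟩ := List.mem_map.1 ha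
    exact Commute.sum_right _ _ _ fun l _ => (commute_average_secondDiff k l).smul_right _

lemma isPositiveDefinite_average (k : Fin d) : (average m k).IsPositiveDefinite := by
  refine ⟨LinearMap.IsSymmetric.one.add ((isSymmetric_secondDiff k).smul (by simp)),
    fun x hx => ?_⟩
  have h4 := neg_four_mul_inner_self_le_inner_secondDiff_self k x
  have hpos := real_inner_self_pos.2 hx
  simp only [average, LinearMap.add_apply, LinearMap.smul_apply, Module.End.one_apply,
    inner_add_left, real_inner_smul_left]
  linarith

lemma isPositiveDefinite_averageProd : (averageProd m).IsPositiveDefinite := by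
  suffices ∀ L : List (Fin d), ((L.map (average m)).prod).IsPositiveDefinite from this _
  intro L
  induction L with
  | nil => exact LinearMap.IsPositiveDefinite.one
  | cons k L ih =>
    rw [List.map_cons, List.prod_cons]
    refine (isPositiveDefinite_average k).mul_of_commute ih
      (Commute.list_prod_right _ _ fun _ ha => ?_)
    obtain ⟨l, -, rfl⟩ := List.mem_map.1 ha
    exact (Commute.one_right _).add_right ((commute_average_secondDiff k l).smul_right _)

lemma isPositiveDefinite_neg_laplacian [Nonempty (Fin d)] {Δx : Fin d → ℝ}
    (hΔx : ∀ k, Δx k ≠ 0) : (-laplacian m Δx).IsPositiveDefinite := by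
  refine ⟨?_, fun x hx => ?_⟩
  · have hL : (laplacian m Δx).IsSymmetric := LinearMap.isSymmetric_sum _ fun k _ =>
      (isSymmetric_secondDiff k).smul (by simp)
    exact fun x y => by simp only [LinearMap.neg_apply, inner_neg_left, inner_neg_right, hL x y]
  · simp only [laplacian, LinearMap.neg_apply, LinearMap.sum_apply, LinearMap.smul_apply,
      inner_neg_left, sum_inner, real_inner_smul_left, ← Finset.sum_neg_distrib, ← mul_neg]
    exact Finset.sum_pos (fun k _ => mul_pos (by have := hΔx k; positivity)
      (neg_pos.2 (inner_secondDiff_self_neg k hx))) Finset.univ_nonempty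

lemma average_apply (k : Fin d) (x : Space m) (i : interior m) :
    average m k x i = x i + (12 : ℝ)⁻¹ * secondDiff m k x i := by
  simp [average]

lemma Aop_extendByZero (k : Fin d) (x : Space m) :
    Aop m k (extendByZero m x) = extendByZero m (average m k x) := by
  ext j
  by_cases h : j ∈ interior m
  · rw [Aop, if_pos (mem_interior.1 h), extendByZero_of_mem (average m k x) h,
      extendByZero_of_mem x h, average_apply, secondDiff_apply, extendByZero_coe]
    ring
  · rw [Aop, if_neg (mt mem_interior.2 h), extendByZero_of_notMem _ h, extendByZero_of_notMem _ h]

lemma Ah_extendByZero (x : Space m) :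
    Ah m (extendByZero m x) = extendByZero m (averageProd m x) := by
  suffices ∀ L : List (Fin d), L.foldr (fun k v => Aop m k v) (extendByZero m x)
      = extendByZero m ((L.map (average m)).prod x) from this _
  intro L
  induction L with
  | nil => rfl
  | cons k L ih =>
    rw [List.foldr_cons, ih, Aop_extendByZero, List.map_cons, List.prod_cons, Module.End.mul_apply]

lemma restrict_lapH (Δx : Fin d → ℝ) (x : Space m) :
    restrict m (lapH Δx (extendByZero m x)) = laplacian m Δx x := by
  ext i
  simp [lapH, d2, laplacian, secondDiff_apply, div_eq_inv_mul]

lemma ip_Ah_neg_lapH (Δx : Fin d → ℝ) (x y : Space m) :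
    ip m Δx (Ah m (extendByZero m x)) (-lapH Δx (extendByZero m y))
      = (∏ r, Δx r) * ⟪averageProd m x, (-laplacian m Δx) y⟫ := by
  rw [ip_eq_inner, Ah_extendByZero, map_neg, restrict_lapH, restrict_extendByZero,
    LinearMap.neg_apply]

end Grid

open Grid

theorem stmt_7_general (d : ℕ) (hd : 1 ≤ d) (m : Fin d → ℕ)
    (Δx : Fin d → ℝ) (hΔx : ∀ k, 0 < Δx k) :
    (∀ u w : (Fin d → ℕ) → ℝ, zeroBnd m u → zeroBnd m w →
      ip m Δx (Ah m u) (-(lapH Δx w)) = ip m Δx (Ah m w) (-(lapH Δx u)))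
    ∧ (∀ (a : ℝ) (u v w : (Fin d → ℕ) → ℝ), zeroBnd m u → zeroBnd m v → zeroBnd m w →
      ip m Δx (Ah m (a • u + v)) (-(lapH Δx w))
        = a * ip m Δx (Ah m u) (-(lapH Δx w)) + ip m Δx (Ah m v) (-(lapH Δx w)))
    ∧ (∀ u : (Fin d → ℕ) → ℝ, zeroBnd m u → u ≠ 0 →
      0 < ip m Δx (Ah m u) (-(lapH Δx u))) := by
  have : Nonempty (Fin d) := ⟨⟨0, hd⟩⟩
  have hA := isPositiveDefinite_averageProd (m := m)
  have hL := isPositiveDefinite_neg_laplacian (m := m) fun k => (hΔx k).ne'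
  have hAL := (commute_averageProd_laplacian (m := m) Δx).neg_right
  refine ⟨fun u w hu hw => ?_, fun a u v w hu hv hw => ?_, fun u hu hne => ?_⟩
  · obtain ⟨x, rfl⟩ := exists_extendByZero_eq hu
    obtain ⟨y, rfl⟩ := exists_extendByZero_eq hw
    rw [ip_Ah_neg_lapH, ip_Ah_neg_lapH, hA.1.inner_map_map_comm hL.1 hAL]
  · obtain ⟨x, rfl⟩ := exists_extendByZero_eq hu
    obtain ⟨y, rfl⟩ := exists_extendByZero_eq hv
    obtain ⟨z, rfl⟩ := exists_extendByZero_eq hw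
    rw [← map_smul, ← map_add, ip_Ah_neg_lapH, ip_Ah_neg_lapH, ip_Ah_neg_lapH, map_add, map_smul,
      inner_add_left, real_inner_smul_left]
    ring
  · obtain ⟨x, rfl⟩ := exists_extendByZero_eq hu
    have hx : x ≠ 0 := by rintro rfl; exact hne (map_zero _)
    have hpos := (hA.mul_of_commute hL hAL).2 x hx
    rw [Module.End.mul_apply, hA.1, real_inner_comm] at hpos
    rw [ip_Ah_neg_lapH]
    exact mul_pos (Finset.prod_pos fun r _ => hΔx r) hpos

/-- On the space `°U` of grid functions vanishing on the boundary, the map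
`(u, w) ↦ (A_h u, −Δ_h w)` is an inner product: it is symmetric, bilinear, and
positive definite. -/
theorem stmt_7 (d : ℕ) (hd : 1 ≤ d) (m : Fin d → ℕ) (hm : ∀ k, 2 ≤ m k)
    (Δx : Fin d → ℝ) (hΔx : ∀ k, 0 < Δx k) :
    (∀ u w : (Fin d → ℕ) → ℝ, zeroBnd m u → zeroBnd m w →
      ip m Δx (Ah m u) (-(lapH Δx w)) = ip m Δx (Ah m w) (-(lapH Δx u)))
    ∧ (∀ (a : ℝ) (u v w : (Fin d → ℕ) → ℝ), zeroBnd m u → zeroBnd m v → zeroBnd m w →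
      ip m Δx (Ah m (a • u + v)) (-(lapH Δx w))
        = a * ip m Δx (Ah m u) (-(lapH Δx w)) + ip m Δx (Ah m v) (-(lapH Δx w)))
    ∧ (∀ u : (Fin d → ℕ) → ℝ, zeroBnd m u → u ≠ 0 →
      0 < ip m Δx (Ah m u) (-(lapH Δx u))) :=
  stmt_7_general d hd m Δx hΔx

end
end

section
/- For every u in the space °U of grid functions vanishing on the boundary of the d-dimensional grid: (2/3)^{d−1} ‖Δ_h u‖² ≤ (Λ_h u, Δ_h u) ≤ ‖Δ_h u‖². -/
/-!
On `°U` the operators `-δ_k²` are symmetric, pairwise commuting matrices `D_k` with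
`0 ≤ D_k ≤ 4 / Δx_k²` (Gershgorin), so in the Loewner order `2/3 ≤ A_l = 1 - (Δx_l² / 12) D_l ≤ 1`
and `(2/3)^{d-1} ≤ P_k = ∏_{l ≠ k} A_l ≤ 1`. With `D = ∑ D_k` we have `Δ_h u = -D u` and
`Λ_h u = -∑ P_k D_k u`, and since products of commuting positive semidefinite matrices are
positive semidefinite, `(2/3)^{d-1} D² ≤ D ∑ P_k D_k ≤ D²`.
-/

open Classical

noncomputable section

open Matrix Finset
open scoped MatrixOrder

section LoewnerOrder

variable {n : Type*} [Fintype n] [DecidableEq n]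

theorem Matrix.PosSemidef.of_sum_abs_offDiag_le {A : Matrix n n ℝ} (hA : A.IsHermitian)
    (h : ∀ i, ∑ j ∈ univ.erase i, |A i j| ≤ A i i) : A.PosSemidef := by
  refine posSemidef_iff_isHermitian_and_spectrum_nonneg.mpr ⟨hA, fun μ hμ => ?_⟩
  rw [← spectrum_toLin', ← Module.End.hasEigenvalue_iff_mem_spectrum] at hμ
  obtain ⟨i, hi⟩ := eigenvalue_mem_ball hμ
  simp only [Metric.mem_closedBall, Real.dist_eq, Real.norm_eq_abs] at hi
  show 0 ≤ μ
  linarith [h i, neg_abs_le (μ - A i i)]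

omit [DecidableEq n] in
theorem Matrix.dotProduct_mulVec_le_of_le {A B : Matrix n n ℝ} (h : A ≤ B) (x : n → ℝ) :
    x ⬝ᵥ A *ᵥ x ≤ x ⬝ᵥ B *ᵥ x := by
  have := (le_iff.mp h).dotProduct_mulVec_nonneg x
  rw [star_trivial, sub_mulVec, dotProduct_sub] at this
  linarith

theorem Matrix.list_prod_le_one {L : List (Matrix n n ℝ)} (hcomm : L.Pairwise Commute)
    (hL : ∀ M ∈ L, 0 ≤ M ∧ M ≤ 1) : L.prod ≤ 1 := by
  induction L with
  | nil => simp
  | cons M L ih =>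
    rw [List.pairwise_cons] at hcomm
    obtain ⟨hM0, hM1⟩ := hL M (by simp)
    have hP := ih hcomm.2 fun N hN => hL N (by simp [hN])
    have hMP : Commute M (1 - L.prod) :=
      (Commute.one_right M).sub_right (Commute.list_prod_right _ _ hcomm.1)
    rw [List.prod_cons, ← sub_nonneg,
      show 1 - M * L.prod = (1 - M) + M * (1 - L.prod) by noncomm_ring]
    exact add_nonneg (sub_nonneg.mpr hM1) (hMP.mul_nonneg hM0 (sub_nonneg.mpr hP))

theorem Matrix.pow_length_smul_one_le_list_prod {c : ℝ} (hc : 0 ≤ c)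
    {L : List (Matrix n n ℝ)} (hcomm : L.Pairwise Commute) (hL : ∀ M ∈ L, c • 1 ≤ M) :
    c ^ L.length • (1 : Matrix n n ℝ) ≤ L.prod := by
  induction L with
  | nil => simp
  | cons M L ih =>
    rw [List.pairwise_cons] at hcomm
    have hM := hL M (by simp)
    have hP := ih hcomm.2 fun N hN => hL N (by simp [hN])
    have hMP : Commute M (L.prod - c ^ L.length • 1) :=
      (Commute.list_prod_right _ _ hcomm.1).sub_right ((Commute.one_right M).smul_right _)
    have hM0 : 0 ≤ M := (smul_nonneg hc zero_le_one).trans hM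
    rw [List.prod_cons, List.length_cons, ← sub_nonneg,
      show M * L.prod - c ^ (L.length + 1) • (1 : Matrix n n ℝ)
        = M * (L.prod - c ^ L.length • 1) + c ^ L.length • (M - c • 1) by
        rw [mul_sub, smul_sub, smul_smul, ← pow_succ, mul_smul_comm, mul_one]; abel]
    exact add_nonneg (hMP.mul_nonneg hM0 (sub_nonneg.mpr hP))
      (smul_nonneg (pow_nonneg hc _) (sub_nonneg.mpr hM))

theorem Matrix.dotProduct_mulVec_sum_bounds {ι : Type*} (s : Finset ι) {D P : ι → Matrix n n ℝ}
    {c : ℝ} (hD : ∀ k, 0 ≤ D k) (hDD : ∀ k l, Commute (D k) (D l))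
    (hPD : ∀ k l, Commute (P k) (D l)) (hcP : ∀ k, c • 1 ≤ P k) (hP1 : ∀ k, P k ≤ 1)
    (v : n → ℝ) :
    c * ((∑ k ∈ s, D k) *ᵥ v ⬝ᵥ (∑ k ∈ s, D k) *ᵥ v)
        ≤ (∑ k ∈ s, P k * D k) *ᵥ v ⬝ᵥ (∑ k ∈ s, D k) *ᵥ v
      ∧ (∑ k ∈ s, P k * D k) *ᵥ v ⬝ᵥ (∑ k ∈ s, D k) *ᵥ v
        ≤ (∑ k ∈ s, D k) *ᵥ v ⬝ᵥ (∑ k ∈ s, D k) *ᵥ v := by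
  -- with `S = ∑ D k`, both gaps `S * ∑ P k * D k - c • S * S` and `S * S - S * ∑ P k * D k`
  -- are sums of products of commuting nonnegative matrices
  set S := ∑ k ∈ s, D k
  have hS : 0 ≤ S := Finset.sum_nonneg fun k _ => hD k
  have hSD : ∀ k, Commute S (D k) := fun k => Commute.sum_left _ _ _ fun l _ => hDD l k
  have hSP : ∀ k, Commute S (P k) := fun k => Commute.sum_left _ _ _ fun l _ => (hPD k l).symm
  have hvS : v ᵥ* S = S *ᵥ v := by
    rw [← vecMul_transpose, ← conjTranspose_eq_transpose_of_trivial,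
      hS.posSemidef.isHermitian.eq]
  have hform : ∀ M : Matrix n n ℝ, M *ᵥ v ⬝ᵥ S *ᵥ v = v ⬝ᵥ (S * M) *ᵥ v := fun M => by
    rw [← mulVec_mulVec, dotProduct_mulVec v S, hvS, dotProduct_comm]
  have hlow : c • (S * S) ≤ S * ∑ k ∈ s, P k * D k := by
    rw [← sub_nonneg, mul_sum, mul_sum, smul_sum, ← sum_sub_distrib]
    refine sum_nonneg fun k _ => ?_
    rw [← mul_smul_comm, ← mul_sub, ← smul_one_mul c (D k), ← sub_mul]
    have hPc : Commute (P k - c • 1) (D k) := (hPD k k).sub_left ((Commute.one_left _).smul_left c)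
    exact (((hSP k).sub_right ((Commute.one_right S).smul_right c)).mul_right (hSD k)).mul_nonneg
      hS (hPc.mul_nonneg (sub_nonneg.mpr (hcP k)) (hD k))
  have hup : S * ∑ k ∈ s, P k * D k ≤ S * S := by
    rw [← sub_nonneg, mul_sum, mul_sum, ← sum_sub_distrib]
    refine sum_nonneg fun k _ => ?_
    rw [← mul_sub, ← one_mul (D k), ← mul_assoc, mul_one, ← sub_mul]
    have hP : Commute (1 - P k) (D k) := (Commute.one_left _).sub_left (hPD k k)
    exact (((Commute.one_right S).sub_right (hSP k)).mul_right (hSD k)).mul_nonneg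
      hS (hP.mul_nonneg (sub_nonneg.mpr (hP1 k)) (hD k))
  simp only [hform]
  have := dotProduct_mulVec_le_of_le hlow v
  rw [smul_mulVec, dotProduct_smul, smul_eq_mul] at this
  exact ⟨this, dotProduct_mulVec_le_of_le hup v⟩

end LoewnerOrder

section GridOperators

variable {d : ℕ}

lemma up_up_comm {k l : Fin d} (h : k ≠ l) (p : Fin d → ℕ) :
    up k (up l p) = up l (up k p) := by
  simp only [up, Function.update_of_ne h, Function.update_of_ne h.symm, Function.update_comm h]

lemma up_down_comm {k l : Fin d} (h : k ≠ l) (p : Fin d → ℕ) :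
    up k (down l p) = down l (up k p) := by
  simp only [up, down, Function.update_of_ne h, Function.update_of_ne h.symm,
    Function.update_comm h]

lemma down_down_comm {k l : Fin d} (h : k ≠ l) (p : Fin d → ℕ) :
    down k (down l p) = down l (down k p) := by
  simp only [down, Function.update_of_ne h, Function.update_of_ne h.symm,
    Function.update_comm h]

lemma eq_up_iff_eq_down {k : Fin d} {p q : Fin d → ℕ} (hq : 1 ≤ q k) :
    q = up k p ↔ p = down k q := by
  constructor
  · rintro rfl; simp [up, down]
  · rintro rfl
    ext r
    rcases eq_or_ne r k with rfl | h
    · simp [up, down]; omega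
    · simp [up, down, h]

lemma d2_comm (Δx : Fin d → ℝ) (k l : Fin d) (w : (Fin d → ℕ) → ℝ) :
    d2 Δx k (d2 Δx l w) = d2 Δx l (d2 Δx k w) := by
  rcases eq_or_ne k l with rfl | h
  · rfl
  funext p
  simp only [d2]
  rw [up_up_comm h, up_down_comm h, up_down_comm h.symm, down_down_comm h]
  ring

def gridInterior (d : ℕ) (m : Fin d → ℕ) : Finset (Fin d → ℕ) :=
  Fintype.piFinset fun k => Finset.Icc 1 (m k - 1)

variable {m : Fin d → ℕ}

lemma mem_gridInterior {j : Fin d → ℕ} : j ∈ gridInterior d m ↔ interiorIdx d m j := by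
  simp [gridInterior, interiorIdx]

def restrictInterior (m : Fin d → ℕ) (w : (Fin d → ℕ) → ℝ) : gridInterior d m → ℝ :=
  fun j => w j

lemma ip_eq_dotProduct (Δx : Fin d → ℝ) (f g : (Fin d → ℕ) → ℝ) :
    ip m Δx f g = (∏ r, Δx r) * (restrictInterior m f ⬝ᵥ restrictInterior m g) :=
  congrArg _ (Finset.sum_coe_sort (gridInterior d m) fun j => f j * g j).symm

lemma sum_ite_coe_eq (f : (Fin d → ℕ) → ℝ) (c : Fin d → ℕ) :
    ∑ j : gridInterior d m, (if (j : Fin d → ℕ) = c then f j else 0)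
      = if c ∈ gridInterior d m then f c else 0 := by
  rw [Finset.sum_coe_sort (gridInterior d m) fun j => if j = c then f j else 0,
    Finset.sum_ite_eq']

/-- `δ_k² u` need not vanish on the faces `j_k ∈ {0, m_k}`, only off the slabs of the other
directions; this is all that the averages `A_l`, `l ≠ k`, applied to it in `Λ_h` can see. -/
def VanishesOffSlab (m : Fin d → ℕ) (r : Fin d) (w : (Fin d → ℕ) → ℝ) : Prop :=
  ∀ p : Fin d → ℕ, ¬(1 ≤ p r ∧ p r ≤ m r - 1) → w p = 0

lemma vanishesOffSlab_of_zeroBnd {u : (Fin d → ℕ) → ℝ} (hu : zeroBnd m u) (r : Fin d) :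
    VanishesOffSlab m r u :=
  fun p hp => hu p fun hint => hp (hint r)

lemma VanishesOffSlab.d2_of_ne {r l : Fin d} (hrl : r ≠ l) {w : (Fin d → ℕ) → ℝ}
    (hw : VanishesOffSlab m r w) (Δx : Fin d → ℝ) : VanishesOffSlab m r (d2 Δx l w) := by
  intro p hp
  have hup : up l p r = p r := Function.update_of_ne hrl _ _
  have hdown : down l p r = p r := Function.update_of_ne hrl _ _
  simp only [d2, hw p hp, hw (up l p) (hup ▸ hp), hw (down l p) (hdown ▸ hp)]
  ring

lemma VanishesOffSlab.aop {r : Fin d} {w : (Fin d → ℕ) → ℝ} (hw : VanishesOffSlab m r w)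
    (l : Fin d) : VanishesOffSlab m r (Aop m l w) := by
  intro p hp
  rw [Aop, if_neg fun hint => hp (hint r), hw p hp]

lemma VanishesOffSlab.apply_of_notMem {l : Fin d} {w : (Fin d → ℕ) → ℝ}
    (hw : VanishesOffSlab m l w) {i p : Fin d → ℕ} (hi : i ∈ gridInterior d m)
    (hpi : ∀ r, r ≠ l → p r = i r) (hp : p ∉ gridInterior d m) : w p = 0 := by
  refine hw p fun hpl => hp (mem_gridInterior.mpr fun r => ?_)
  rcases eq_or_ne r l with rfl | hrl
  · exact hpl
  · rw [hpi r hrl]; exact mem_gridInterior.mp hi r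

variable (m) in
/-- The matrix of `-δ_k²` on `°U`, a grid function in `°U` being the vector of its interior
values. -/
def negD2Matrix (Δx : Fin d → ℝ) (k : Fin d) :
    Matrix (gridInterior d m) (gridInterior d m) ℝ :=
  Matrix.of fun i j =>
    ((if j = i then 2 else 0) - (if (j : Fin d → ℕ) = up k i then 1 else 0)
      - (if (j : Fin d → ℕ) = down k i then 1 else 0)) / Δx k ^ 2

variable (Δx : Fin d → ℝ)

lemma negD2Matrix_mulVec {k : Fin d} {w : (Fin d → ℕ) → ℝ} (hw : VanishesOffSlab m k w) :
    negD2Matrix m Δx k *ᵥ restrictInterior m w = -restrictInterior m (d2 Δx k w) := by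
  funext i
  have hup : up k i ∉ gridInterior d m → w (up k i) = 0 :=
    hw.apply_of_notMem i.2 fun r hr => Function.update_of_ne hr _ _
  have hdown : down k i ∉ gridInterior d m → w (down k i) = 0 :=
    hw.apply_of_notMem i.2 fun r hr => Function.update_of_ne hr _ _
  simp only [mulVec, dotProduct, negD2Matrix, of_apply, div_mul_eq_mul_div, sub_mul, ite_mul,
    zero_mul, one_mul, ← Finset.sum_div, Finset.sum_sub_distrib, Finset.sum_ite_eq',
    Finset.mem_univ, if_true, restrictInterior, sum_ite_coe_eq, Pi.neg_apply, d2]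
  split_ifs with h1 h2 h2
  · ring
  · rw [hdown h2]; ring
  · rw [hup h1]; ring
  · rw [hup h1, hdown h2]; ring

lemma negD2Matrix_transpose (k : Fin d) : (negD2Matrix m Δx k)ᵀ = negD2Matrix m Δx k := by
  ext i j
  have hi : 1 ≤ (i : Fin d → ℕ) k := (mem_gridInterior.mp i.2 k).1
  have hj : 1 ≤ (j : Fin d → ℕ) k := (mem_gridInterior.mp j.2 k).1
  simp only [transpose_apply, negD2Matrix, of_apply, eq_comm (a := i),
    if_congr (eq_up_iff_eq_down hi) rfl rfl, if_congr (eq_up_iff_eq_down hj).symm rfl rfl]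
  ring

lemma negD2Matrix_isHermitian (k : Fin d) : (negD2Matrix m Δx k).IsHermitian := by
  rw [IsHermitian, conjTranspose_eq_transpose_of_trivial, negD2Matrix_transpose]

lemma negD2Matrix_apply_self (k : Fin d) (i : gridInterior d m) :
    negD2Matrix m Δx k i i = 2 / Δx k ^ 2 := by
  have hi : 1 ≤ (i : Fin d → ℕ) k := (mem_gridInterior.mp i.2 k).1
  have hup : (i : Fin d → ℕ) ≠ up k i := fun h => by
    have := congrFun h k; simp [up] at this
  have hdown : (i : Fin d → ℕ) ≠ down k i := fun h => by
    have := congrFun h k; simp [down] at this; omega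
  simp [negD2Matrix, hup, hdown]

/-- Each row of `-δ_k²` has at most two off-diagonal entries, both equal to `-1 / Δx_k²`. -/
lemma sum_abs_negD2Matrix_offDiag_le (k : Fin d) (i : gridInterior d m) :
    ∑ j ∈ univ.erase i, |negD2Matrix m Δx k i j| ≤ 2 / Δx k ^ 2 := by
  let a : gridInterior d m → ℝ := fun j =>
    ((if (j : Fin d → ℕ) = up k i then 1 else 0) + (if (j : Fin d → ℕ) = down k i then 1 else 0))
      / Δx k ^ 2
  calc ∑ j ∈ univ.erase i, |negD2Matrix m Δx k i j| = ∑ j ∈ univ.erase i, a j := by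
        refine Finset.sum_congr rfl fun j hj => ?_
        rw [negD2Matrix, of_apply, if_neg (Finset.ne_of_mem_erase hj), abs_of_nonpos]
        · ring
        · apply div_nonpos_of_nonpos_of_nonneg _ (sq_nonneg _); split_ifs <;> norm_num
    _ ≤ ∑ j, a j := Finset.sum_le_sum_of_subset_of_nonneg (Finset.erase_subset _ _)
        fun j _ _ => by positivity
    _ ≤ 2 / Δx k ^ 2 := by
        simp only [a, ← Finset.sum_div, Finset.sum_add_distrib]
        rw [sum_ite_coe_eq (fun _ => 1), sum_ite_coe_eq (fun _ => 1)]
        gcongr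
        split_ifs <;> norm_num

lemma negD2Matrix_nonneg (k : Fin d) : 0 ≤ negD2Matrix m Δx k :=
  (PosSemidef.of_sum_abs_offDiag_le (negD2Matrix_isHermitian Δx k) fun i => by
    rw [negD2Matrix_apply_self]; exact sum_abs_negD2Matrix_offDiag_le Δx k i).nonneg

lemma negD2Matrix_le (k : Fin d) : negD2Matrix m Δx k ≤ (4 / Δx k ^ 2) • 1 := by
  refine le_iff.mpr (PosSemidef.of_sum_abs_offDiag_le ?_ fun i => ?_)
  · rw [IsHermitian, conjTranspose_eq_transpose_of_trivial, transpose_sub, transpose_smul,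
      transpose_one, negD2Matrix_transpose]
  · rw [Matrix.sub_apply, Matrix.smul_apply, one_apply_eq, smul_eq_mul, negD2Matrix_apply_self]
    calc ∑ j ∈ univ.erase i, |((4 / Δx k ^ 2) • (1 : Matrix (gridInterior d m) (gridInterior d m) ℝ)
          - negD2Matrix m Δx k) i j|
        = ∑ j ∈ univ.erase i, |negD2Matrix m Δx k i j| :=
          Finset.sum_congr rfl fun j hj => by
            rw [Matrix.sub_apply, Matrix.smul_apply, one_apply_ne (Finset.ne_of_mem_erase hj).symm]
            simp
      _ ≤ 2 / Δx k ^ 2 := sum_abs_negD2Matrix_offDiag_le Δx k i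
      _ = 4 / Δx k ^ 2 * 1 - 2 / Δx k ^ 2 := by ring

lemma negD2Matrix_commute (k l : Fin d) :
    Commute (negD2Matrix m Δx k) (negD2Matrix m Δx l) := by
  rcases eq_or_ne k l with rfl | hkl
  · exact Commute.refl _
  -- on a unit vector both products are restrictions of `δ_k² δ_l² w = δ_l² δ_k² w`
  refine ext_of_mulVec_single fun i => ?_
  let w : (Fin d → ℕ) → ℝ := fun p => if p = i then 1 else 0
  have hw : ∀ r, VanishesOffSlab m r w := fun r p hp =>
    if_neg fun (h : p = i) => hp (h ▸ mem_gridInterior.mp i.2 r)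
  have hsingle : Pi.single i 1 = restrictInterior m w := by
    funext j
    rcases eq_or_ne j i with rfl | h
    · simp [restrictInterior, w]
    · simp [restrictInterior, w, h, Subtype.coe_injective.ne h]
  rw [hsingle, ← mulVec_mulVec, ← mulVec_mulVec, negD2Matrix_mulVec Δx (hw l),
    negD2Matrix_mulVec Δx (hw k), mulVec_neg, mulVec_neg,
    negD2Matrix_mulVec Δx ((hw k).d2_of_ne hkl Δx),
    negD2Matrix_mulVec Δx ((hw l).d2_of_ne hkl.symm Δx), d2_comm]

variable (m) in
/-- The matrix of the averaging operator `A_l = 1 + (Δx_l² / 12) δ_l²` on `°U`. -/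
def avgMatrix (l : Fin d) : Matrix (gridInterior d m) (gridInterior d m) ℝ :=
  1 - (Δx l ^ 2 / 12) • negD2Matrix m Δx l

lemma avgMatrix_commute_negD2Matrix (l k : Fin d) :
    Commute (avgMatrix m Δx l) (negD2Matrix m Δx k) :=
  (Commute.one_left _).sub_left ((negD2Matrix_commute Δx l k).smul_left _)

lemma avgMatrix_commute (l k : Fin d) : Commute (avgMatrix m Δx l) (avgMatrix m Δx k) :=
  (Commute.one_right _).sub_right ((avgMatrix_commute_negD2Matrix Δx l k).smul_right _)

lemma avgMatrix_le_one (l : Fin d) : avgMatrix m Δx l ≤ 1 :=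
  sub_le_self _ (smul_nonneg (by positivity) (negD2Matrix_nonneg Δx l))

lemma two_thirds_smul_one_le_avgMatrix {l : Fin d} (hl : 0 < Δx l) :
    (2 / 3 : ℝ) • 1 ≤ avgMatrix m Δx l := by
  have key : avgMatrix m Δx l - (2 / 3 : ℝ) • 1
      = (Δx l ^ 2 / 12) • ((4 / Δx l ^ 2) • 1 - negD2Matrix m Δx l) := by
    rw [avgMatrix, smul_sub, smul_smul,
      show Δx l ^ 2 / 12 * (4 / Δx l ^ 2) = 1 - 2 / 3 by field_simp; norm_num, sub_smul,
      one_smul]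
    abel
  rw [← sub_nonneg, key]
  exact smul_nonneg (by positivity) (sub_nonneg.mpr (negD2Matrix_le Δx l))

lemma restrictInterior_aop {l : Fin d} (hl : Δx l ≠ 0) {w : (Fin d → ℕ) → ℝ}
    (hw : VanishesOffSlab m l w) :
    restrictInterior m (Aop m l w) = avgMatrix m Δx l *ᵥ restrictInterior m w := by
  rw [avgMatrix, sub_mulVec, one_mulVec, smul_mulVec, negD2Matrix_mulVec Δx hw]
  funext i
  simp only [restrictInterior, Aop, if_pos (mem_gridInterior.mp i.2), d2, Pi.sub_apply,
    Pi.smul_apply, Pi.neg_apply, smul_eq_mul]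
  field_simp
  ring

lemma VanishesOffSlab.foldr_aop {r : Fin d} {w : (Fin d → ℕ) → ℝ} (hw : VanishesOffSlab m r w)
    (k : Fin d) (L : List (Fin d)) :
    VanishesOffSlab m r (L.foldr (fun l v => if l = k then v else Aop m l v) w) := by
  induction L with
  | nil => exact hw
  | cons l L ih =>
    rw [List.foldr_cons]
    split_ifs
    exacts [ih, ih.aop l]

lemma restrictInterior_foldr_aop (hΔx : ∀ l, Δx l ≠ 0) {k : Fin d} {w : (Fin d → ℕ) → ℝ}
    (hw : ∀ r, r ≠ k → VanishesOffSlab m r w) (L : List (Fin d)) :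
    restrictInterior m (L.foldr (fun l v => if l = k then v else Aop m l v) w)
      = ((L.filter (· ≠ k)).map (avgMatrix m Δx)).prod *ᵥ restrictInterior m w := by
  induction L with
  | nil => simp
  | cons l L ih =>
    by_cases hlk : l = k
    · simpa [hlk] using ih
    · rw [List.foldr_cons, if_neg hlk, List.filter_cons_of_pos (by simpa using hlk),
        List.map_cons, List.prod_cons, ← mulVec_mulVec, ← ih,
        restrictInterior_aop Δx (hΔx l) ((hw l hlk).foldr_aop k L)]

variable (m) in
def avgProdMatrix (k : Fin d) : Matrix (gridInterior d m) (gridInterior d m) ℝ :=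
  (((List.finRange d).filter (· ≠ k)).map (avgMatrix m Δx)).prod

lemma avgProdMatrix_commute_negD2Matrix (k l : Fin d) :
    Commute (avgProdMatrix m Δx k) (negD2Matrix m Δx l) :=
  Commute.list_prod_left _ _ fun _ hM => by
    obtain ⟨r, -, rfl⟩ := List.mem_map.mp hM
    exact avgMatrix_commute_negD2Matrix Δx r l

lemma pairwise_commute_avgMatrix (L : List (Fin d)) :
    (L.map (avgMatrix m Δx)).Pairwise Commute :=
  List.pairwise_map.mpr (List.pairwise_of_forall (avgMatrix_commute Δx))

lemma avgProdMatrix_le_one (hΔx : ∀ l, 0 < Δx l) (k : Fin d) : avgProdMatrix m Δx k ≤ 1 := by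
  refine list_prod_le_one (pairwise_commute_avgMatrix Δx _) fun M hM => ?_
  obtain ⟨l, -, rfl⟩ := List.mem_map.mp hM
  exact ⟨(smul_nonneg (by norm_num) zero_le_one).trans
    (two_thirds_smul_one_le_avgMatrix Δx (hΔx l)), avgMatrix_le_one Δx l⟩

lemma length_filter_finRange_ne (k : Fin d) :
    ((List.finRange d).filter (· ≠ k)).length = d - 1 := by
  have := List.length_erase_of_mem (List.mem_finRange k)
  rw [(List.nodup_finRange d).erase_eq_filter, List.length_finRange] at this
  convert this using 3
  funext x
  by_cases h : x = k <;> simp [h]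

lemma pow_smul_one_le_avgProdMatrix (hΔx : ∀ l, 0 < Δx l) (k : Fin d) :
    (2 / 3 : ℝ) ^ (d - 1) • 1 ≤ avgProdMatrix m Δx k := by
  rw [← length_filter_finRange_ne k, ← List.length_map (f := avgMatrix m Δx)]
  refine pow_length_smul_one_le_list_prod (by norm_num) (pairwise_commute_avgMatrix Δx _)
    fun M hM => ?_
  obtain ⟨l, -, rfl⟩ := List.mem_map.mp hM
  exact two_thirds_smul_one_le_avgMatrix Δx (hΔx l)

lemma restrictInterior_lapH {u : (Fin d → ℕ) → ℝ} (hu : zeroBnd m u) :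
    restrictInterior m (lapH Δx u)
      = -((∑ k, negD2Matrix m Δx k) *ᵥ restrictInterior m u) := by
  rw [Matrix.sum_mulVec, ← Finset.sum_neg_distrib]
  funext i
  simp only [restrictInterior, lapH, Finset.sum_apply]
  refine Finset.sum_congr rfl fun k _ => ?_
  rw [negD2Matrix_mulVec Δx (vanishesOffSlab_of_zeroBnd hu k), neg_neg]
  rfl

lemma restrictInterior_LamH (hΔx : ∀ l, Δx l ≠ 0) {u : (Fin d → ℕ) → ℝ} (hu : zeroBnd m u) :
    restrictInterior m (LamH m Δx u)
      = -((∑ k, avgProdMatrix m Δx k * negD2Matrix m Δx k) *ᵥ restrictInterior m u) := by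
  rw [Matrix.sum_mulVec, ← Finset.sum_neg_distrib]
  funext i
  simp only [restrictInterior, LamH, Finset.sum_apply]
  refine Finset.sum_congr rfl fun k _ => ?_
  have hw : ∀ r, r ≠ k → VanishesOffSlab m r (d2 Δx k u) := fun r hr =>
    (vanishesOffSlab_of_zeroBnd hu r).d2_of_ne hr Δx
  rw [← mulVec_mulVec, negD2Matrix_mulVec Δx (vanishesOffSlab_of_zeroBnd hu k), mulVec_neg,
    neg_neg, avgProdMatrix, ← restrictInterior_foldr_aop Δx hΔx hw]
  rfl

end GridOperators

theorem stmt_9_general (d : ℕ) (m : Fin d → ℕ)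
    (Δx : Fin d → ℝ) (hΔx : ∀ k, 0 < Δx k)
    (u : (Fin d → ℕ) → ℝ) (hu : zeroBnd m u) :
    (2/3 : ℝ) ^ (d - 1) * ip m Δx (lapH Δx u) (lapH Δx u)
        ≤ ip m Δx (LamH m Δx u) (lapH Δx u)
    ∧ ip m Δx (LamH m Δx u) (lapH Δx u) ≤ ip m Δx (lapH Δx u) (lapH Δx u) := by
  have hvol : 0 ≤ ∏ r, Δx r := prod_nonneg fun r _ => (hΔx r).le
  obtain ⟨hlow, hup⟩ := dotProduct_mulVec_sum_bounds univ (negD2Matrix_nonneg Δx)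
    (negD2Matrix_commute Δx) (avgProdMatrix_commute_negD2Matrix Δx)
    (pow_smul_one_le_avgProdMatrix Δx hΔx) (avgProdMatrix_le_one Δx hΔx)
    (restrictInterior m u)
  simp only [ip_eq_dotProduct, restrictInterior_lapH Δx hu,
    restrictInterior_LamH Δx (fun l => (hΔx l).ne') hu, neg_dotProduct, dotProduct_neg, neg_neg]
  exact ⟨by rw [mul_left_comm]; exact mul_le_mul_of_nonneg_left hlow hvol,
    mul_le_mul_of_nonneg_left hup hvol⟩

/-- For every `u ∈ °U`: `(2/3)^{d−1} ‖Δ_h u‖² ≤ (Λ_h u, Δ_h u) ≤ ‖Δ_h u‖²`. -/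
theorem stmt_9 (d : ℕ) (hd : 1 ≤ d) (m : Fin d → ℕ) (hm : ∀ k, 2 ≤ m k)
    (Δx : Fin d → ℝ) (hΔx : ∀ k, 0 < Δx k)
    (u : (Fin d → ℕ) → ℝ) (hu : zeroBnd m u) :
    (2/3 : ℝ) ^ (d - 1) * ip m Δx (lapH Δx u) (lapH Δx u)
        ≤ ip m Δx (LamH m Δx u) (lapH Δx u)
    ∧ ip m Δx (LamH m Δx u) (lapH Δx u) ≤ ip m Δx (lapH Δx u) (lapH Δx u) :=
  stmt_9_general d m Δx hΔx u hu

end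
end

section
/- Recurrence for the history term: let 1 ≤ k ≤ n−1, λ > 0, and u ∈ C⁰([0,T]) (with values u(t_l) at grid points). Define H^{(k)} = ∫₀^{t_k} (L₂u)'(τ) e^{−λ(t_{k+σ_k}−τ)/T} dτ, where for τ ∈ [t_{l−1}, t_l] (1 ≤ l ≤ k) L₂u is the quadratic interpolant of u at t_{l−1}, t_l, t_{l+1}, and H^{(0)} = 0. Then H^{(k)} = e^{−λ(1+σ_k−σ_{k−1})Δt/T} H^{(k−1)} + A(u(t_k) − u(t_{k−1})) + B(u(t_{k+1}) − u(t_k)), where A = ∫₀¹ (3/2 − s) e^{−λ(σ_k+1−s)Δt/T} ds and B = ∫₀¹ (s − 1/2) e^{−λ(σ_k+1−s)Δt/T} ds. -/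
/-!
On the last cell `[t_{k-1}, t_k]`, in the variable `s = (τ - t_{k-1})/Δt`, the derivative of the
quadratic interpolant is `((3/2 - s)(u_k - u_{k-1}) + (s - 1/2)(u_{k+1} - u_k))/Δt`, which produces
the `A` and `B` terms. On the earlier cells the kernel factors as
`e^{-λ(t_{k+σ_k} - t_{k-1+σ_{k-1}})/T}` times the kernel of `H^{(k-1)}`.
-/

open Real intervalIntegral

noncomputable def lagrangeQuadratic (x₀ x₁ x₂ y₀ y₁ y₂ τ : ℝ) : ℝ :=
  y₀ * ((τ - x₁) * (τ - x₂) / ((x₀ - x₁) * (x₀ - x₂)))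
    + y₁ * ((τ - x₀) * (τ - x₂) / ((x₁ - x₀) * (x₁ - x₂)))
    + y₂ * ((τ - x₀) * (τ - x₁) / ((x₂ - x₀) * (x₂ - x₁)))

theorem hasDerivAt_mul_sub_div (p q D τ : ℝ) :
    HasDerivAt (fun x ↦ (x - p) * (x - q) / D) ((2 * τ - p - q) / D) τ := by
  refine ((((hasDerivAt_id τ).sub_const p).mul ((hasDerivAt_id τ).sub_const q)).div_const
    D).congr_deriv ?_
  simp only [id]
  ring

theorem hasDerivAt_lagrangeQuadratic (x₀ x₁ x₂ y₀ y₁ y₂ τ : ℝ) :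
    HasDerivAt (lagrangeQuadratic x₀ x₁ x₂ y₀ y₁ y₂)
      (y₀ * ((2 * τ - x₁ - x₂) / ((x₀ - x₁) * (x₀ - x₂)))
        + y₁ * ((2 * τ - x₀ - x₂) / ((x₁ - x₀) * (x₁ - x₂)))
        + y₂ * ((2 * τ - x₀ - x₁) / ((x₂ - x₀) * (x₂ - x₁)))) τ :=
  (((hasDerivAt_mul_sub_div _ _ _ τ).const_mul y₀).add
    ((hasDerivAt_mul_sub_div _ _ _ τ).const_mul y₁)).add
    ((hasDerivAt_mul_sub_div _ _ _ τ).const_mul y₂)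

theorem deriv_lagrangeQuadratic_uniform {h : ℝ} (hh : h ≠ 0) (x₀ y₀ y₁ y₂ s : ℝ) :
    deriv (lagrangeQuadratic x₀ (x₀ + h) (x₀ + 2 * h) y₀ y₁ y₂) (x₀ + h * s)
      = ((3 / 2 - s) * (y₁ - y₀) + (s - 1 / 2) * (y₂ - y₁)) / h := by
  rw [(hasDerivAt_lagrangeQuadratic ..).deriv]
  simp only [show x₀ - (x₀ + h) = -h by ring,
    show x₀ - (x₀ + 2 * h) = -(2 * h) by ring, show x₀ + h - x₀ = h by ring,
    show x₀ + h - (x₀ + 2 * h) = -h by ring, show x₀ + 2 * h - x₀ = 2 * h by ring,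
    show x₀ + 2 * h - (x₀ + h) = h by ring]
  field_simp
  ring

theorem integral_deriv_lagrangeQuadratic_mul {h : ℝ} (hh : h ≠ 0) {x₀ x₁ x₂ : ℝ}
    (hx₁ : x₁ = x₀ + h) (hx₂ : x₂ = x₀ + 2 * h) (y₀ y₁ y₂ : ℝ) {w : ℝ → ℝ} (hw : Continuous w) :
    ∫ τ in x₀..x₁, deriv (lagrangeQuadratic x₀ x₁ x₂ y₀ y₁ y₂) τ * w τ
      = (∫ s in (0 : ℝ)..1, (3 / 2 - s) * w (x₀ + h * s)) * (y₁ - y₀)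
        + (∫ s in (0 : ℝ)..1, (s - 1 / 2) * w (x₀ + h * s)) * (y₂ - y₁) := by
  subst hx₁ hx₂
  have hw' : Continuous fun s ↦ w (x₀ + h * s) := hw.comp (by fun_prop)
  calc ∫ τ in x₀..x₀ + h, deriv (lagrangeQuadratic x₀ (x₀ + h) (x₀ + 2 * h) y₀ y₁ y₂) τ * w τ
      = h • ∫ s in (0 : ℝ)..1,
          deriv (lagrangeQuadratic x₀ (x₀ + h) (x₀ + 2 * h) y₀ y₁ y₂) (x₀ + h * s)
            * w (x₀ + h * s) := by
        simpa using (smul_integral_comp_add_mul (a := 0) (b := 1)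
          (f := fun τ ↦ deriv (lagrangeQuadratic x₀ (x₀ + h) (x₀ + 2 * h) y₀ y₁ y₂) τ * w τ)
          h x₀).symm
    _ = ∫ s in (0 : ℝ)..1, (3 / 2 - s) * w (x₀ + h * s) * (y₁ - y₀)
          + (s - 1 / 2) * w (x₀ + h * s) * (y₂ - y₁) := by
        rw [smul_eq_mul, ← integral_const_mul]
        refine integral_congr fun s _ ↦ ?_
        rw [deriv_lagrangeQuadratic_uniform hh]
        field_simp
    _ = _ := by
        rw [integral_add (Continuous.intervalIntegrable (by fun_prop) _ _)
          (Continuous.intervalIntegrable (by fun_prop) _ _), integral_mul_const, integral_mul_const]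

theorem sum_integral_mul_exp_shift (s : Finset ℕ) (a b : ℕ → ℝ) (f : ℕ → ℝ → ℝ)
    (lam T x y : ℝ) :
    ∑ l ∈ s, ∫ τ in a l..b l, f l τ * exp (-lam * (x - τ) / T)
      = exp (-lam * (x - y) / T) * ∑ l ∈ s, ∫ τ in a l..b l, f l τ * exp (-lam * (y - τ) / T) := by
  rw [Finset.mul_sum]
  refine Finset.sum_congr rfl fun l _ ↦ ?_
  rw [← integral_const_mul]
  refine integral_congr fun τ _ ↦ ?_
  rw [mul_left_comm, ← exp_add]
  congr 2
  ring

theorem stmt_12_general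
    (T : ℝ) (hT : 1 ≤ T) (n : ℕ) (hn : 0 < n)
    (Δt : ℝ) (hΔt : Δt = T / n)
    (t : ℕ → ℝ) (ht : ∀ j, t j = (j : ℝ) * Δt)
    (σ : ℕ → ℝ)
    (k : ℕ) (hk1 : 1 ≤ k)
    (lam : ℝ)
    (u : ℝ → ℝ)
    -- `P l` is the quadratic (Lagrange) interpolant of `u` at `t_{l−1}, t_l, t_{l+1}`
    (P : ℕ → ℝ → ℝ)
    (hP : ∀ l τ, P l τ =
        u (t (l-1)) * ((τ - t l) * (τ - t (l+1)) / ((t (l-1) - t l) * (t (l-1) - t (l+1))))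
      + u (t l) * ((τ - t (l-1)) * (τ - t (l+1)) / ((t l - t (l-1)) * (t l - t (l+1))))
      + u (t (l+1)) * ((τ - t (l-1)) * (τ - t l) / ((t (l+1) - t (l-1)) * (t (l+1) - t l))))
    (H : ℕ → ℝ)
    (hH : ∀ k', H k' = ∑ l ∈ Finset.Icc 1 k',
        ∫ τ in t (l-1)..t l, deriv (P l) τ * Real.exp (-lam * ((t k' + σ k' * Δt) - τ) / T))
    (A B : ℝ)
    (hA : A = ∫ x in (0:ℝ)..1, (3/2 - x) * Real.exp (-lam * (σ k + 1 - x) * Δt / T))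
    (hB : B = ∫ x in (0:ℝ)..1, (x - 1/2) * Real.exp (-lam * (σ k + 1 - x) * Δt / T)) :
    H k = Real.exp (-lam * (1 + σ k - σ (k-1)) * Δt / T) * H (k-1)
      + A * (u (t k) - u (t (k-1))) + B * (u (t (k+1)) - u (t k)) := by
  obtain ⟨m, rfl⟩ : ∃ m, k = m + 1 := ⟨k - 1, by omega⟩
  have hΔt0 : Δt ≠ 0 := by
    rw [hΔt]
    exact div_ne_zero (by linarith) (Nat.cast_pos.mpr hn).ne'
  have h₁ : t (m + 1) = t m + Δt := by rw [ht, ht]; push_cast; ring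
  have h₂ : t (m + 1 + 1) = t m + 2 * Δt := by rw [ht, ht]; push_cast; ring
  have hPm : P (m + 1) = lagrangeQuadratic (t m) (t (m + 1)) (t (m + 1 + 1))
      (u (t m)) (u (t (m + 1))) (u (t (m + 1 + 1))) := funext (hP (m + 1))
  rw [hH, hH, Finset.sum_Icc_succ_top (by omega),
    sum_integral_mul_exp_shift _ _ _ _ lam T _ (t m + σ m * Δt)]
  simp only [Nat.add_sub_cancel]
  rw [hPm, integral_deriv_lagrangeQuadratic_mul hΔt0 h₁ h₂ _ _ _ (by fun_prop)]
  have hshift : -lam * (t m + Δt + σ (m + 1) * Δt - (t m + σ m * Δt)) / T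
      = -lam * (1 + σ (m + 1) - σ m) * Δt / T := by ring
  have hdecay : ∀ s, -lam * (t m + Δt + σ (m + 1) * Δt - (t m + Δt * s)) / T
      = -lam * (σ (m + 1) + 1 - s) * Δt / T := fun s ↦ by ring
  rw [hA, hB, h₁]
  simp only [hshift, hdecay]
  ring

/-- Recurrence for the history term: with
`H^{(k)} = ∫₀^{t_k}(L₂u)'(τ)e^{−λ(t_{k+σ_k}−τ)/T}dτ` (and `H^{(0)} = 0`) one has
`H^{(k)} = e^{−λ(1+σ_k−σ_{k−1})Δt/T} H^{(k−1)} + A(u(t_k)−u(t_{k−1})) + B(u(t_{k+1})−u(t_k))`,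
where `A = ∫₀¹(3/2−s)e^{−λ(σ_k+1−s)Δt/T}ds`, `B = ∫₀¹(s−1/2)e^{−λ(σ_k+1−s)Δt/T}ds`. -/
theorem stmt_12
    (T : ℝ) (hT : 1 ≤ T) (n : ℕ) (hn : 0 < n)
    (Δt : ℝ) (hΔt : Δt = T / n)
    (t : ℕ → ℝ) (ht : ∀ j, t j = (j : ℝ) * Δt)
    (σ : ℕ → ℝ) (hσ : ∀ k, k ≤ n - 1 → σ k ∈ Set.Ioo (1/2 : ℝ) 1)
    (k : ℕ) (hk1 : 1 ≤ k) (hk2 : k ≤ n - 1)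
    (lam : ℝ) (hlam : 0 < lam)
    (u : ℝ → ℝ) (hu : ContinuousOn u (Set.Icc 0 T))
    -- `P l` is the quadratic (Lagrange) interpolant of `u` at `t_{l−1}, t_l, t_{l+1}`
    (P : ℕ → ℝ → ℝ)
    (hP : ∀ l τ, P l τ =
        u (t (l-1)) * ((τ - t l) * (τ - t (l+1)) / ((t (l-1) - t l) * (t (l-1) - t (l+1))))
      + u (t l) * ((τ - t (l-1)) * (τ - t (l+1)) / ((t l - t (l-1)) * (t l - t (l+1))))
      + u (t (l+1)) * ((τ - t (l-1)) * (τ - t l) / ((t (l+1) - t (l-1)) * (t (l+1) - t l))))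
    (H : ℕ → ℝ)
    (hH : ∀ k', H k' = ∑ l ∈ Finset.Icc 1 k',
        ∫ τ in t (l-1)..t l, deriv (P l) τ * Real.exp (-lam * ((t k' + σ k' * Δt) - τ) / T))
    (A B : ℝ)
    (hA : A = ∫ x in (0:ℝ)..1, (3/2 - x) * Real.exp (-lam * (σ k + 1 - x) * Δt / T))
    (hB : B = ∫ x in (0:ℝ)..1, (x - 1/2) * Real.exp (-lam * (σ k + 1 - x) * Δt / T)) :
    H k = Real.exp (-lam * (1 + σ k - σ (k-1)) * Δt / T) * H (k-1)
      + A * (u (t k) - u (t (k-1))) + B * (u (t (k+1)) - u (t k)) :=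
  stmt_12_general T hT n hn Δt hΔt t ht σ k hk1 lam u P hP H hH A B hA hB
end

section
/- Summation-by-coefficients identity for the fast formula: let 1 ≤ k ≤ n−1, write α = α_{k+σ_k}, and let u ∈ C⁰([0,T]). Then (T^{−α}/Γ(1−α)) Σ_{i=N̲+1}^{N̄} θ_i^{(k)} ∫₀^{t_k} (L₂u)'(τ) e^{−λ_i(t_{k+σ_k}−τ)/T} dτ + s^{(k)} σ_k^{1−α} (u(t_{k+1}) − u(t_k)) = s^{(k)} Σ_{l=0}^{k} ρ_l^{(k)} (u(t_{k−l+1}) − u(t_{k−l})). -/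
/-!
On the cell `[t_j, t_{j+1}]` the derivative of the quadratic interpolant is the affine function
`δu_j / Δt + (δu_{j+1} - δu_j) / Δt² · (τ - t_{j+1/2})`, where `δu_j = u(t_{j+1}) - u(t_j)`.
Hence the history term is a combination of the increments `δu_j` weighted by the cell integrals
of `K` and of `(τ - t_{j+1/2}) K`. Summation by parts regroups these weights by increment, and
the weight of `δu_{k-l}` is exactly `s⁽ᵏ⁾ ρ_l⁽ᵏ⁾`; the local integral over `[t_k, t_{k+σ_k}]` in
`ρ_0⁽ᵏ⁾` accounts for the term `s⁽ᵏ⁾ σ_k^{1-α} δu_k`.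
-/

open Finset intervalIntegral

theorem sum_range_mul_add_sub_mul (x a b : ℕ → ℝ) (m : ℕ) :
    ∑ j ∈ range (m + 1), (x j * a j + (x (j + 1) - x j) * b j)
      = (a 0 - b 0) * x 0 + ∑ j ∈ range m, (b j + a (j + 1) - b (j + 1)) * x (j + 1)
        + b m * x (m + 1) := by
  induction m with
  | zero => simp; ring
  | succ m ih => rw [sum_range_succ, ih, sum_range_succ]; ring

theorem mul_sum_range_mul_add_sub_mul_eq_sum_range_mul_rev (c E : ℝ) (x a b ρ : ℕ → ℝ) (m : ℕ)
    (hρ₀ : ρ 0 = c * b m + E)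
    (hρ : ∀ j < m, ρ (m - j) = c * (b j + a (j + 1) - b (j + 1)))
    (hρ_last : ρ (m + 1) = c * (a 0 - b 0)) :
    c * ∑ j ∈ range (m + 1), (x j * a j + (x (j + 1) - x j) * b j) + E * x (m + 1)
      = ∑ l ∈ range (m + 2), ρ l * x (m + 1 - l) := by
  have hmid : ∑ l ∈ range m, ρ (l + 1) * x (m + 1 - (l + 1))
      = c * ∑ j ∈ range m, (b j + a (j + 1) - b (j + 1)) * x (j + 1) := by
    rw [mul_sum, ← sum_range_reflect]
    refine sum_congr rfl fun j hj => ?_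
    have hj : j < m := mem_range.1 hj
    rw [show m - 1 - j + 1 = m - j by omega, show m + 1 - (m - j) = j + 1 by omega, hρ j hj,
      mul_assoc]
  rw [sum_range_mul_add_sub_mul, sum_range_succ, sum_range_succ', hmid, hρ₀, hρ_last,
    Nat.sub_zero, Nat.sub_self]
  ring

noncomputable def quadInterp (a b c ya yb yc τ : ℝ) : ℝ :=
  ya * ((τ - b) * (τ - c) / ((a - b) * (a - c)))
    + yb * ((τ - a) * (τ - c) / ((b - a) * (b - c)))
    + yc * ((τ - a) * (τ - b) / ((c - a) * (c - b)))

theorem deriv_quadInterp_of_uniform {a b c h : ℝ} (hb : b = a + h) (hc : c = b + h) (hh : h ≠ 0)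
    (ya yb yc τ : ℝ) :
    deriv (quadInterp a b c ya yb yc) τ
      = (yb - ya) / h + ((yc - yb) - (yb - ya)) / h ^ 2 * (τ - (a + b) / 2) := by
  have hlin : ∀ p q, HasDerivAt (fun τ : ℝ => (τ - p) * (τ - q)) (2 * τ - p - q) τ := fun p q =>
    (((hasDerivAt_id' τ).sub_const p).mul ((hasDerivAt_id' τ).sub_const q)).congr_deriv (by ring)
  have H : HasDerivAt (quadInterp a b c ya yb yc) _ τ :=
    ((((hlin b c).div_const ((a - b) * (a - c))).const_mul ya).add
      (((hlin a c).div_const ((b - a) * (b - c))).const_mul yb)).add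
      (((hlin a b).div_const ((c - a) * (c - b))).const_mul yc)
  rw [H.deriv]
  subst hb hc
  rw [show a - (a + h) = -h by ring, show a - (a + h + h) = -(2 * h) by ring,
    show a + h - a = h by ring, show a + h - (a + h + h) = -h by ring,
    show a + h + h - a = 2 * h by ring, show a + h + h - (a + h) = h by ring]
  field_simp
  ring

section Kernel

variable {K : ℝ → ℝ} (hK : Continuous K) (a b : ℝ)
include hK

theorem integral_affine_mul (p q μ : ℝ) :
    ∫ τ in a..b, (p + q * (τ - μ)) * K τ
      = p * (∫ τ in a..b, K τ) + q * ∫ τ in a..b, (τ - μ) * K τ := by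
  simp_rw [add_mul, mul_assoc]
  rw [integral_add, integral_const_mul, integral_const_mul] <;>
    exact Continuous.intervalIntegrable (by fun_prop) _ _

theorem integral_const_sub_mul (c μ : ℝ) :
    ∫ τ in a..b, (c - τ) * K τ = (c - μ) * (∫ τ in a..b, K τ) - ∫ τ in a..b, (τ - μ) * K τ := by
  have := integral_affine_mul hK a b (c - μ) (-1) μ
  simp only [neg_one_mul, ← sub_eq_add_neg, sub_sub_sub_cancel_right] at this
  rw [this]

end Kernel

theorem sum_mul_integral_mul_eq_integral_mul_sum {ι : Type*} (I : Finset ι) (θ : ι → ℝ)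
    {f : ℝ → ℝ} {g : ι → ℝ → ℝ} (hf : Continuous f) (hg : ∀ i ∈ I, Continuous (g i)) (a b : ℝ) :
    ∑ i ∈ I, θ i * ∫ τ in a..b, f τ * g i τ = ∫ τ in a..b, f τ * ∑ i ∈ I, θ i * g i τ := by
  calc ∑ i ∈ I, θ i * ∫ τ in a..b, f τ * g i τ
      = ∑ i ∈ I, ∫ τ in a..b, θ i * (f τ * g i τ) := by simp_rw [integral_const_mul]
    _ = ∫ τ in a..b, ∑ i ∈ I, θ i * (f τ * g i τ) :=
      (integral_finsetSum fun i hi => ((hf.mul (hg i hi)).const_mul _).intervalIntegrable _ _).symm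
    _ = ∫ τ in a..b, f τ * ∑ i ∈ I, θ i * g i τ :=
      integral_congr fun τ _ => by simp only [mul_sum]; exact sum_congr rfl fun i _ => by ring

theorem integral_sub_rpow_neg {α : ℝ} (hα : α < 1) (a d : ℝ) :
    ∫ τ in a..a + d, (a + d - τ) ^ (-α) = d ^ (1 - α) / (1 - α) := by
  rw [integral_comp_sub_left (fun y => y ^ (-α)), sub_self, add_sub_cancel_left,
    integral_rpow (Or.inl (by linarith)), Real.zero_rpow (by linarith), sub_zero, neg_add_eq_sub]

noncomputable def cellIntegral (K : ℝ → ℝ) (t : ℕ → ℝ) (j : ℕ) : ℝ :=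
  ∫ τ in t j..t (j + 1), K τ

noncomputable def cellMoment (K : ℝ → ℝ) (h : ℝ) (t : ℕ → ℝ) (j : ℕ) : ℝ :=
  ∫ τ in t j..t (j + 1), (τ - (j + 1 / 2) * h) * K τ

theorem sum_mul_sum_integral_deriv_quadInterp_mul {ι : Type*} (I : Finset ι) (θ : ι → ℝ)
    {g : ι → ℝ → ℝ} (hg : ∀ i ∈ I, Continuous (g i)) {K : ℝ → ℝ}
    (hK : ∀ τ, K τ = ∑ i ∈ I, θ i * g i τ) {h : ℝ} (hh : h ≠ 0) {t : ℕ → ℝ}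
    (ht : ∀ j, t j = j * h) (u : ℝ → ℝ) {P : ℕ → ℝ → ℝ}
    (hP : ∀ l, P l = quadInterp (t (l - 1)) (t l) (t (l + 1)) (u (t (l - 1))) (u (t l))
      (u (t (l + 1)))) (m : ℕ) :
    ∑ i ∈ I, θ i * ∑ l ∈ Icc 1 (m + 1), ∫ τ in t (l - 1)..t l, deriv (P l) τ * g i τ
      = ∑ j ∈ range (m + 1), ((u (t (j + 1)) - u (t j)) * (cellIntegral K t j / h)
          + ((u (t (j + 2)) - u (t (j + 1))) - (u (t (j + 1)) - u (t j)))
            * (cellMoment K h t j / h ^ 2)) := by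
  have hKc : Continuous K := by
    rw [funext hK]; exact continuous_finsetSum _ fun i hi => (hg i hi).const_mul _
  simp_rw [mul_sum]
  rw [sum_comm, ← Ico_add_one_right_eq_Icc, sum_Ico_eq_sum_range]
  refine sum_congr rfl fun j _ => ?_
  have hderiv : deriv (P (j + 1)) = fun τ => (u (t (j + 1)) - u (t j)) / h
      + ((u (t (j + 2)) - u (t (j + 1))) - (u (t (j + 1)) - u (t j))) / h ^ 2
        * (τ - (j + 1 / 2) * h) := by
    funext τ
    rw [hP, Nat.add_sub_cancel, deriv_quadInterp_of_uniform (by rw [ht, ht]; push_cast; ring)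
      (by rw [ht, ht]; push_cast; ring) hh, ht, ht]
    push_cast; ring
  rw [add_comm 1 j, Nat.add_sub_cancel, hderiv,
    sum_mul_integral_mul_eq_integral_mul_sum I θ (by fun_prop) hg]
  simp_rw [← hK]
  rw [integral_affine_mul hKc, cellIntegral, cellMoment]
  ring

theorem rpow_neg_div_gamma_two_sub_mul {h α : ℝ} (hh : 0 < h) (hα : α < 1) (T : ℝ) :
    h ^ (-α) / Real.Gamma (2 - α) * (h ^ (α - 2) * (1 - α) * T ^ (-α))
      = T ^ (-α) / Real.Gamma (1 - α) / h ^ 2 := by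
  have hΓ : Real.Gamma (2 - α) = (1 - α) * Real.Gamma (1 - α) := by
    rw [show 2 - α = (1 - α) + 1 by ring, Real.Gamma_add_one (by linarith)]
  have hpow : h ^ (-α) * h ^ (α - 2) * h ^ 2 = 1 := by
    rw [← Real.rpow_natCast, ← Real.rpow_add hh, ← Real.rpow_add hh]
    convert Real.rpow_zero h using 2
    push_cast; ring
  have hΓpos : 0 < Real.Gamma (1 - α) := Real.Gamma_pos_of_pos (by linarith)
  have h1 : 1 - α ≠ 0 := by linarith
  rw [hΓ]
  field_simp
  linear_combination T ^ (-α) * hpow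

theorem rpow_mul_integral_rpow_neg {T h σ α : ℝ} (hT : 0 < T) (hh : 0 < h) (hσ : 0 ≤ σ)
    (hα : α < 1) (a : ℝ) :
    h ^ (α - 2) * (1 - α) * T ^ (-α) * (T ^ α * ∫ τ in a..a + σ * h, h * (a + σ * h - τ) ^ (-α))
      = σ ^ (1 - α) := by
  have hT' : T ^ (-α) * T ^ α = 1 := by rw [← Real.rpow_add hT, neg_add_cancel, Real.rpow_zero]
  have hh' : h ^ (α - 2) * h ^ (1 : ℝ) * h ^ (1 - α) = 1 := by
    rw [← Real.rpow_add hh, ← Real.rpow_add hh, show α - 2 + 1 + (1 - α) = 0 by ring,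
      Real.rpow_zero]
  rw [Real.rpow_one] at hh'
  have h1 : 1 - α ≠ 0 := by linarith
  rw [integral_const_mul, integral_sub_rpow_neg hα, Real.mul_rpow hσ hh.le]
  field_simp
  linear_combination σ ^ (1 - α) * (T ^ (-α) * T ^ α * hh' + hT')

theorem natCast_mul_add_mul_mem_Icc {T Δt σ : ℝ} {n k : ℕ} (hT : 0 < T) (hn : 0 < n)
    (hΔt : Δt = T / n) (hσ : σ ∈ Set.Icc 0 1) (hk : k + 1 ≤ n) :
    k * Δt + σ * Δt ∈ Set.Icc 0 T := by
  have hΔt₀ : 0 < Δt := by rw [hΔt]; exact div_pos hT (by exact_mod_cast hn)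
  have hkn : (k : ℝ) + 1 ≤ n := by exact_mod_cast hk
  refine ⟨by nlinarith [hσ.1], ?_⟩
  calc k * Δt + σ * Δt ≤ n * Δt := by nlinarith [hσ.2]
    _ = T := by rw [hΔt]; field_simp

theorem stmt_13_general
    (T : ℝ) (hT : 1 ≤ T) (n : ℕ) (hn : 0 < n)
    (Δt : ℝ) (hΔt : Δt = T / n)
    (t : ℕ → ℝ) (ht : ∀ j, t j = (j : ℝ) * Δt)
    (αl αu : ℝ) (hαu : αu < 1)
    (α : ℝ → ℝ) (hαr : ∀ x ∈ Set.Icc (0 : ℝ) T, α x ∈ Set.Icc αl αu)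
    (k : ℕ) (hk1 : 1 ≤ k) (hk2 : k ≤ n - 1)
    (σ : ℝ) (hσ : σ ∈ Set.Ioo (1/2 : ℝ) 1)
    (tkσ αk : ℝ) (htkσ : tkσ = t k + σ * Δt) (hαk : αk = α tkσ)
    (s : ℝ) (hs : s = Δt ^ (-αk) / Real.Gamma (2 - αk))
    (Nl Nu : ℤ) (lam θ : ℤ → ℝ)
    (u : ℝ → ℝ)
    -- `P l` is the quadratic (Lagrange) interpolant of `u` at `t_{l−1}, t_l, t_{l+1}`
    (P : ℕ → ℝ → ℝ)
    (hP : ∀ l τ, P l τ =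
        u (t (l-1)) * ((τ - t l) * (τ - t (l+1)) / ((t (l-1) - t l) * (t (l-1) - t (l+1))))
      + u (t l) * ((τ - t (l-1)) * (τ - t (l+1)) / ((t l - t (l-1)) * (t l - t (l+1))))
      + u (t (l+1)) * ((τ - t (l-1)) * (τ - t l) / ((t (l+1) - t (l-1)) * (t (l+1) - t l))))
    -- the exponential-sum kernel
    (K : ℝ → ℝ)
    (hK : ∀ τ, K τ = ∑ i ∈ Finset.Icc (Nl + 1) Nu, θ i * Real.exp (-lam i * (tkσ - τ) / T))
    -- the fast coefficients
    (ρ : ℕ → ℝ)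
    (hρ0 : ρ 0 = Δt ^ (αk - 2) * (1 - αk) * T ^ (-αk) *
      ((∫ τ in t (k-1)..t k, (τ - ((k : ℝ) - 1/2) * Δt) * K τ) +
        T ^ αk * ∫ τ in t k..tkσ, Δt * (tkσ - τ) ^ (-αk)))
    (hρl : ∀ l, 1 ≤ l → l + 1 ≤ k → ρ l = Δt ^ (αk - 2) * (1 - αk) * T ^ (-αk) *
      ((∫ τ in t (k-l-1)..t (k-l), (τ - ((k : ℝ) - (l : ℝ) - 1/2) * Δt) * K τ) +
        ∫ τ in t (k-l)..t (k-l+1), (((k : ℝ) - (l : ℝ) + 3/2) * Δt - τ) * K τ))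
    (hρk : ρ k = Δt ^ (αk - 2) * (1 - αk) * T ^ (-αk) *
      ∫ τ in (t 0)..(t 1), ((3/2 : ℝ) * Δt - τ) * K τ) :
    T ^ (-αk) / Real.Gamma (1 - αk) *
        (∑ i ∈ Finset.Icc (Nl + 1) Nu, θ i * ∑ l ∈ Finset.Icc 1 k,
          ∫ τ in t (l-1)..t l, deriv (P l) τ * Real.exp (-lam i * (tkσ - τ) / T))
      + s * σ ^ (1 - αk) * (u (t (k+1)) - u (t k))
      = s * ∑ l ∈ Finset.range (k + 1), ρ l * (u (t (k - l + 1)) - u (t (k - l))) := by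
  obtain ⟨m, rfl⟩ : ∃ m, k = m + 1 := ⟨k - 1, by omega⟩
  subst htkσ
  have hT0 : 0 < T := by linarith
  have hh : 0 < Δt := by rw [hΔt]; exact div_pos hT0 (by exact_mod_cast hn)
  have hα : αk < 1 := by
    have hmem := natCast_mul_add_mul_mem_Icc hT0 hn hΔt ⟨by linarith [hσ.1], hσ.2.le⟩
      (by omega : m + 1 + 1 ≤ n)
    rw [← ht] at hmem
    exact hαk ▸ (hαr _ hmem).2.trans_lt hαu
  have hKc : Continuous K := by rw [funext hK]; fun_prop
  have hsD := hs ▸ rpow_neg_div_gamma_two_sub_mul hh hα T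
  set c := T ^ (-αk) / Real.Gamma (1 - αk)
  have hsρ₀ : s * ρ 0 = c * (cellMoment K Δt t m / Δt ^ 2) + s * σ ^ (1 - αk) := by
    rw [hρ0, Nat.add_sub_cancel, show ((m + 1 : ℕ) : ℝ) - 1 / 2 = m + 1 / 2 by push_cast; ring,
      mul_add, rpow_mul_integral_rpow_neg hT0 hh (by linarith [hσ.1]) hα, mul_add, ← mul_assoc,
      hsD, cellMoment]
    ring
  have hsρ : ∀ j < m, s * ρ (m - j) = c * (cellMoment K Δt t j / Δt ^ 2
      + cellIntegral K t (j + 1) / Δt - cellMoment K Δt t (j + 1) / Δt ^ 2) := by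
    intro j hj
    have hcast : ((m + 1 : ℕ) : ℝ) - ((m - j : ℕ) : ℝ) = j + 1 := by
      rw [Nat.cast_sub hj.le]; push_cast; ring
    rw [hρl (m - j) (by omega) (by omega), show m + 1 - (m - j) - 1 = j by omega,
      show m + 1 - (m - j) = j + 1 by omega, hcast, show (j : ℝ) + 1 - 1 / 2 = j + 1 / 2 by ring,
      integral_const_sub_mul hKc _ _ _ ((((j + 1 : ℕ) : ℝ) + 1 / 2) * Δt), ← cellMoment,
      ← cellMoment, ← cellIntegral, ← mul_assoc, hsD]
    push_cast
    field_simp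
    ring
  have hsρ_last :
      s * ρ (m + 1) = c * (cellIntegral K t 0 / Δt - cellMoment K Δt t 0 / Δt ^ 2) := by
    rw [hρk, integral_const_sub_mul hKc _ _ _ ((((0 : ℕ) : ℝ) + 1 / 2) * Δt), ← mul_assoc, hsD,
      cellMoment, cellIntegral]
    field_simp
    ring
  calc _ = c * ∑ j ∈ range (m + 1), ((u (t (j + 1)) - u (t j)) * (cellIntegral K t j / Δt)
          + ((u (t (j + 2)) - u (t (j + 1))) - (u (t (j + 1)) - u (t j)))
            * (cellMoment K Δt t j / Δt ^ 2))
          + s * σ ^ (1 - αk) * (u (t (m + 2)) - u (t (m + 1))) := by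
        rw [sum_mul_sum_integral_deriv_quadInterp_mul _ θ
          (g := fun i τ => Real.exp (-lam i * (t (m + 1) + σ * Δt - τ) / T))
          (fun i _ => by fun_prop) hK hh.ne' ht u (fun l => funext (hP l))]
    _ = ∑ l ∈ range (m + 2), s * ρ l * (u (t (m + 1 - l + 1)) - u (t (m + 1 - l))) :=
        mul_sum_range_mul_add_sub_mul_eq_sum_range_mul_rev c _ (fun j => u (t (j + 1)) - u (t j))
          _ _ (fun l => s * ρ l) m hsρ₀ hsρ hsρ_last
    _ = _ := by rw [mul_sum]; simp only [mul_assoc]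

/-- Summation-by-coefficients identity for the fast FL2-1σ formula:
`(T^{−α}/Γ(1−α)) Σ_i θ_i^{(k)} ∫₀^{t_k}(L₂u)'(τ)e^{−λ_i(t_{k+σ_k}−τ)/T}dτ
  + s^{(k)} σ_k^{1−α}(u(t_{k+1}) − u(t_k))
  = s^{(k)} Σ_{l=0}^{k} ρ_l^{(k)}(u(t_{k−l+1}) − u(t_{k−l}))`. -/
theorem stmt_13
    (T : ℝ) (hT : 1 ≤ T) (n : ℕ) (hn : 0 < n)
    (Δt : ℝ) (hΔt : Δt = T / n)
    (t : ℕ → ℝ) (ht : ∀ j, t j = (j : ℝ) * Δt)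
    (αl αu : ℝ) (hαl : 0 < αl) (hαu : αu < 1)
    (α : ℝ → ℝ) (hαr : ∀ x ∈ Set.Icc (0 : ℝ) T, α x ∈ Set.Icc αl αu)
    (k : ℕ) (hk1 : 1 ≤ k) (hk2 : k ≤ n - 1)
    (σ : ℝ) (hσ : σ ∈ Set.Ioo (1/2 : ℝ) 1)
    (tkσ αk : ℝ) (htkσ : tkσ = t k + σ * Δt) (hαk : αk = α tkσ)
    (s : ℝ) (hs : s = Δt ^ (-αk) / Real.Gamma (2 - αk))
    (Nl Nu : ℤ) (lam θ : ℤ → ℝ)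
    (hlam : ∀ i ∈ Finset.Icc (Nl + 1) Nu, 0 < lam i)
    (hθ : ∀ i ∈ Finset.Icc (Nl + 1) Nu, 0 < θ i)
    (u : ℝ → ℝ) (hu : ContinuousOn u (Set.Icc 0 T))
    -- `P l` is the quadratic (Lagrange) interpolant of `u` at `t_{l−1}, t_l, t_{l+1}`
    (P : ℕ → ℝ → ℝ)
    (hP : ∀ l τ, P l τ =
        u (t (l-1)) * ((τ - t l) * (τ - t (l+1)) / ((t (l-1) - t l) * (t (l-1) - t (l+1))))
      + u (t l) * ((τ - t (l-1)) * (τ - t (l+1)) / ((t l - t (l-1)) * (t l - t (l+1))))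
      + u (t (l+1)) * ((τ - t (l-1)) * (τ - t l) / ((t (l+1) - t (l-1)) * (t (l+1) - t l))))
    -- the exponential-sum kernel
    (K : ℝ → ℝ)
    (hK : ∀ τ, K τ = ∑ i ∈ Finset.Icc (Nl + 1) Nu, θ i * Real.exp (-lam i * (tkσ - τ) / T))
    -- the fast coefficients
    (ρ : ℕ → ℝ)
    (hρ0 : ρ 0 = Δt ^ (αk - 2) * (1 - αk) * T ^ (-αk) *
      ((∫ τ in t (k-1)..t k, (τ - ((k : ℝ) - 1/2) * Δt) * K τ) +
        T ^ αk * ∫ τ in t k..tkσ, Δt * (tkσ - τ) ^ (-αk)))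
    (hρl : ∀ l, 1 ≤ l → l + 1 ≤ k → ρ l = Δt ^ (αk - 2) * (1 - αk) * T ^ (-αk) *
      ((∫ τ in t (k-l-1)..t (k-l), (τ - ((k : ℝ) - (l : ℝ) - 1/2) * Δt) * K τ) +
        ∫ τ in t (k-l)..t (k-l+1), (((k : ℝ) - (l : ℝ) + 3/2) * Δt - τ) * K τ))
    (hρk : ρ k = Δt ^ (αk - 2) * (1 - αk) * T ^ (-αk) *
      ∫ τ in (t 0)..(t 1), ((3/2 : ℝ) * Δt - τ) * K τ) :
    T ^ (-αk) / Real.Gamma (1 - αk) *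
        (∑ i ∈ Finset.Icc (Nl + 1) Nu, θ i * ∑ l ∈ Finset.Icc 1 k,
          ∫ τ in t (l-1)..t l, deriv (P l) τ * Real.exp (-lam i * (tkσ - τ) / T))
      + s * σ ^ (1 - αk) * (u (t (k+1)) - u (t k))
      = s * ∑ l ∈ Finset.range (k + 1), ρ l * (u (t (k - l + 1)) - u (t (k - l))) :=
  stmt_13_general T hT n hn Δt hΔt t ht αl αu hαu α hαr k hk1 hk2 σ hσ tkσ αk htkσ hαk s hs Nl Nu
    lam θ u P hP K hK ρ hρ0 hρl hρk
end

section
/- Closed form for the first-step coefficient combination (k = 1): let α ∈ (0,1) and σ = 1 − α/2. With g₀ = (1−α)∫₀¹ (s − 1/2)(σ + 1 − s)^{−α} ds + σ^{1−α} and g₁ = (1−α)∫₀¹ (3/2 − s)(σ + 1 − s)^{−α} ds, one has (2σ−1)g₀ − σg₁ = ((2σ−1)(1−σ)/(2σ)) (1+σ)^{1−α}; in particular (2σ−1)g₀ − σg₁ > 0. -/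
/-!
With `u = c - s`, the integrand `(p s + q) u^r` equals `(p c + q) u^r - p u^(r+1)`, so both
integrals have elementary primitives. For `σ = 1 - α/2` one has `1 - α = 2σ - 1`, and in the
combination `(2σ - 1) g₀ - σ g₁` all terms in `σ^(1-α)` cancel, leaving a positive multiple
of `(1 + σ)^(1-α)`.
-/

open Real

theorem hasDerivAt_rpow_sub_mul_linear {p q c r s : ℝ} (hr₁ : r + 1 ≠ 0) (hr₂ : r + 2 ≠ 0)
    (hs : s < c) :
    HasDerivAt (fun s => (c - s) ^ (r + 1) * (p * (c - s) / (r + 2) - (p * c + q) / (r + 1)))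
      ((p * s + q) * (c - s) ^ r) s := by
  have hu : c - s ≠ 0 := (sub_pos.2 hs).ne'
  have hsub : HasDerivAt (fun s : ℝ => c - s) (-1) s := by
    simpa using (hasDerivAt_id s).const_sub c
  have hpow := hsub.rpow_const (p := r + 1) (Or.inl hu)
  have hlin := (hsub.const_mul p).div_const (r + 2) |>.sub_const ((p * c + q) / (r + 1))
  refine (hpow.mul hlin).congr_deriv ?_
  rw [add_sub_cancel_right, rpow_add_one hu]
  field_simp
  ring

theorem integral_linear_mul_rpow_sub {p q c r a b : ℝ} (hr₁ : r + 1 ≠ 0) (hr₂ : r + 2 ≠ 0)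
    (ha : a < c) (hb : b < c) :
    ∫ s in a..b, (p * s + q) * (c - s) ^ r
      = (c - b) ^ (r + 1) * (p * (c - b) / (r + 2) - (p * c + q) / (r + 1))
        - (c - a) ^ (r + 1) * (p * (c - a) / (r + 2) - (p * c + q) / (r + 1)) := by
  have hlt : ∀ s ∈ Set.uIcc a b, s < c := fun s hs =>
    (Set.mem_uIcc.1 hs).elim (fun h => h.2.trans_lt hb) (fun h => h.2.trans_lt ha)
  refine intervalIntegral.integral_eq_sub_of_hasDerivAt
    (fun s hs => hasDerivAt_rpow_sub_mul_linear hr₁ hr₂ (hlt s hs)) ?_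
  exact (ContinuousOn.mul (by fun_prop) (ContinuousOn.rpow_const (by fun_prop)
    fun s hs => Or.inl (sub_pos.2 (hlt s hs)).ne')).intervalIntegrable

/-- Closed form for the first-step coefficient combination (k = 1) of the L2-1σ
scheme with weight `σ = 1 − α/2`:
`(2σ−1)g₀ − σg₁ = ((2σ−1)(1−σ)/(2σ)) (1+σ)^{1−α} > 0`. -/
theorem stmt_15 (α : ℝ) (hα : α ∈ Set.Ioo (0 : ℝ) 1) (σ g₀ g₁ : ℝ)
    (hσ : σ = 1 - α / 2)
    (hg0 : g₀ = (1 - α) * (∫ s in (0:ℝ)..1, (s - 1/2) * (σ + 1 - s) ^ (-α)) + σ ^ (1 - α))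
    (hg1 : g₁ = (1 - α) * ∫ s in (0:ℝ)..1, (3/2 - s) * (σ + 1 - s) ^ (-α)) :
    (2*σ - 1) * g₀ - σ * g₁ = ((2*σ - 1) * (1 - σ) / (2*σ)) * (1 + σ) ^ (1 - α)
    ∧ 0 < (2*σ - 1) * g₀ - σ * g₁ := by
  obtain ⟨hα₀, hα₁⟩ := hα
  have hr₁ : -α + 1 ≠ 0 := by linarith
  have hr₂ : -α + 2 ≠ 0 := by linarith
  have e₀ : (fun s : ℝ => (s - 1/2) * (σ + 1 - s) ^ (-α))
      = fun s => (1 * s + -1/2) * (σ + 1 - s) ^ (-α) := by ext; ring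
  have e₁ : (fun s : ℝ => (3/2 - s) * (σ + 1 - s) ^ (-α))
      = fun s => (-1 * s + 3/2) * (σ + 1 - s) ^ (-α) := by ext; ring
  rw [e₀, integral_linear_mul_rpow_sub hr₁ hr₂ (by linarith) (by linarith)] at hg0
  rw [e₁, integral_linear_mul_rpow_sub hr₁ hr₂ (by linarith) (by linarith)] at hg1
  simp only [sub_zero, add_sub_cancel_right, neg_add_eq_sub] at hg0 hg1
  have hEq : (2*σ - 1) * g₀ - σ * g₁ = ((2*σ - 1) * (1 - σ) / (2*σ)) * (1 + σ) ^ (1 - α) := by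
    rw [hg0, hg1, add_comm 1 σ]
    generalize σ ^ (1 - α) = P
    generalize (σ + 1) ^ (1 - α) = Q
    have h₁ : 1 - α ≠ 0 := by linarith
    have h₂ : 2 - α ≠ 0 := by linarith
    subst hσ
    field_simp
    ring
  refine ⟨hEq, hEq ▸ mul_pos (div_pos (mul_pos ?_ ?_) ?_) (rpow_pos_of_pos ?_ _)⟩ <;> linarith
end

section
/- Closed form for the coefficient combination at steps k ≥ 2: let α ∈ (0,1) and σ = 1 − α/2. With g₀ = (1−α)∫₀¹ (s − 1/2)(σ + 1 − s)^{−α} ds + σ^{1−α} and g₁ = (1−α)[∫₀¹ (s − 1/2)(σ + 2 − s)^{−α} ds + ∫₀¹ (3/2 − s)(σ + 1 − s)^{−α} ds], one has (2σ−1)g₀ − σg₁ = (1+σ)^{1−α} ((4σ−1)/(2σ) − ((2+σ)/(1+σ))^{1−α}), and moreover (2σ−1)g₀ − σg₁ ≥ (2σ−1)(1−σ)/(2σ(1+σ)^{α}) > 0. -/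
/-!
Each integral is elementary: `((d - c)/(1 - α) + (c - s)/(2 - α)) (c - s)^(1 - α)` is an
antiderivative of `(s - d)(c - s)^(-α)`. Since `1 - α = 2σ - 1` and `2 - α = 2σ`, the terms in
`σ^(1 - α)` cancel in `(2σ - 1)g₀ - σg₁`, which leaves the closed form. For the lower bound,
Bernoulli's inequality with exponent `2σ - 1 ∈ (0, 1)` gives
`((2 + σ)/(1 + σ))^(1 - α) ≤ 3σ/(1 + σ)`, and `(4σ - 1)/(2σ) - 3σ/(1 + σ) = (2σ - 1)(1 - σ)/(2σ(1 + σ))`.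
-/

open Real Set

theorem hasDerivAt_antideriv_sub_mul_rpow_neg {α c d t : ℝ} (hα1 : α ≠ 1) (hα2 : α ≠ 2)
    (ht : t < c) :
    HasDerivAt (fun u => ((d - c) / (1 - α) + (c - u) / (2 - α)) * (c - u) ^ (1 - α))
      ((t - d) * (c - t) ^ (-α)) t := by
  have h1α : 1 - α ≠ 0 := sub_ne_zero.mpr hα1.symm
  have h2α : 2 - α ≠ 0 := sub_ne_zero.mpr hα2.symm
  have hpos : 0 < c - t := sub_pos.mpr ht
  have hlin : HasDerivAt (fun u : ℝ => c - u) (-1) t := by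
    simpa using (hasDerivAt_id t).const_sub c
  have hpow := hlin.rpow_const (p := 1 - α) (Or.inl hpos.ne')
  refine (((hlin.div_const (2 - α)).const_add ((d - c) / (1 - α))).mul hpow).congr_deriv ?_
  rw [show 1 - α - 1 = -α by ring, show (c - t) ^ (1 - α) = (c - t) * (c - t) ^ (-α) by
    rw [show 1 - α = 1 + -α by ring, rpow_add hpos, rpow_one]]
  field_simp
  ring

theorem integral_sub_mul_rpow_neg {α c : ℝ} (d : ℝ) (hα1 : α ≠ 1) (hα2 : α ≠ 2) (hc : 1 < c) :
    ∫ s in (0 : ℝ)..1, (s - d) * (c - s) ^ (-α)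
      = ((d - c) / (1 - α) + (c - 1) / (2 - α)) * (c - 1) ^ (1 - α)
        - ((d - c) / (1 - α) + c / (2 - α)) * c ^ (1 - α) := by
  have hlt : ∀ s ∈ uIcc (0 : ℝ) 1, s < c := fun s hs => by
    rw [uIcc_of_le zero_le_one] at hs
    linarith [hs.2]
  have hint : IntervalIntegrable (fun s => (s - d) * (c - s) ^ (-α)) MeasureTheory.volume 0 1 :=
    ContinuousOn.intervalIntegrable <| (continuousOn_id.sub continuousOn_const).mul <|
      (continuousOn_const.sub continuousOn_id).rpow_const fun s hs =>
        Or.inl (sub_pos.mpr (hlt s hs)).ne'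
  rw [intervalIntegral.integral_eq_sub_of_hasDerivAt
    (fun s hs => hasDerivAt_antideriv_sub_mul_rpow_neg hα1 hα2 (hlt s hs)) hint]
  simp

theorem rpow_two_add_div_one_add_le {σ p : ℝ} (hσ : 0 < σ) (hp0 : 0 ≤ p) (hp1 : p ≤ 1) :
    ((2 + σ) / (1 + σ)) ^ p ≤ 1 + p / (1 + σ) := by
  have h : (2 + σ) / (1 + σ) = 1 + 1 / (1 + σ) := by field_simp; ring
  rw [h, div_eq_mul_one_div p]
  exact rpow_one_add_le_one_add_mul_self
    (by linarith [one_div_pos.mpr (by linarith : 0 < 1 + σ)]) hp0 hp1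

theorem two_mul_sub_one_mul_one_sub_div_le {α σ : ℝ} (hσ0 : 1 / 2 < σ) (hσ1 : σ < 1)
    (hα : α = 2 - 2 * σ) :
    (2 * σ - 1) * (1 - σ) / (2 * σ * (1 + σ) ^ α)
      ≤ (1 + σ) ^ (1 - α) * ((4 * σ - 1) / (2 * σ) - ((2 + σ) / (1 + σ)) ^ (1 - α)) :=
  calc (2 * σ - 1) * (1 - σ) / (2 * σ * (1 + σ) ^ α)
      = (1 + σ) ^ (1 - α) * ((4 * σ - 1) / (2 * σ) - (1 + (1 - α) / (1 + σ))) := by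
        rw [rpow_sub (by linarith), rpow_one, hα]
        field_simp
        ring
    _ ≤ (1 + σ) ^ (1 - α) * ((4 * σ - 1) / (2 * σ) - ((2 + σ) / (1 + σ)) ^ (1 - α)) := by
        gcongr
        exact rpow_two_add_div_one_add_le (by linarith) (by linarith) (by linarith)

/-- Closed form for the L2-1σ coefficient combination at steps `k ≥ 2` with weight
`σ = 1 − α/2`:
`(2σ−1)g₀ − σg₁ = (1+σ)^{1−α}((4σ−1)/(2σ) − ((2+σ)/(1+σ))^{1−α})` and moreover
`(2σ−1)g₀ − σg₁ ≥ (2σ−1)(1−σ)/(2σ(1+σ)^α) > 0`. -/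
theorem stmt_16 (α : ℝ) (hα : α ∈ Set.Ioo (0 : ℝ) 1) (σ g₀ g₁ : ℝ)
    (hσ : σ = 1 - α / 2)
    (hg0 : g₀ = (1 - α) * (∫ s in (0:ℝ)..1, (s - 1/2) * (σ + 1 - s) ^ (-α)) + σ ^ (1 - α))
    (hg1 : g₁ = (1 - α) * ((∫ s in (0:ℝ)..1, (s - 1/2) * (σ + 2 - s) ^ (-α))
        + ∫ s in (0:ℝ)..1, (3/2 - s) * (σ + 1 - s) ^ (-α))) :
    (2*σ - 1) * g₀ - σ * g₁
        = (1 + σ) ^ (1 - α) * ((4*σ - 1) / (2*σ) - ((2 + σ) / (1 + σ)) ^ (1 - α))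
    ∧ (2*σ - 1) * g₀ - σ * g₁ ≥ (2*σ - 1) * (1 - σ) / (2 * σ * (1 + σ) ^ α)
    ∧ 0 < (2*σ - 1) * (1 - σ) / (2 * σ * (1 + σ) ^ α) := by
  obtain ⟨hα0, hα1⟩ := hα
  have hσ0 : 0 < σ := by linarith
  have hα2 : α ≠ 2 := by linarith
  have h2σ1 : 2 * σ - 1 ≠ 0 := by linarith
  have closed_form : (2*σ - 1) * g₀ - σ * g₁
      = (1 + σ) ^ (1 - α) * ((4*σ - 1) / (2*σ) - ((2 + σ) / (1 + σ)) ^ (1 - α)) := by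
    have hneg : ∫ s in (0:ℝ)..1, (3/2 - s) * (σ + 1 - s) ^ (-α)
        = -∫ s in (0:ℝ)..1, (s - 3/2) * (σ + 1 - s) ^ (-α) := by
      rw [← intervalIntegral.integral_neg]
      simp only [← neg_mul, neg_sub]
    rw [hg0, hg1, hneg, div_rpow (by linarith) (by linarith)]
    simp only [integral_sub_mul_rpow_neg _ hα1.ne hα2 (by linarith : 1 < σ + 1),
      integral_sub_mul_rpow_neg _ hα1.ne hα2 (by linarith : 1 < σ + 2)]
    rw [show σ + 1 - 1 = σ by ring, show σ + 2 - 1 = 1 + σ by ring, add_comm σ 1, add_comm σ 2,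
      show 1 - α = 2 * σ - 1 by linarith, show 2 - α = 2 * σ by linarith]
    have hpow : (1 + σ) ^ (2 * σ - 1) ≠ 0 := by positivity
    field_simp
    ring
  refine ⟨closed_form, ?_, div_pos (mul_pos (by linarith) (by linarith)) (by positivity)⟩
  rw [closed_form, ge_iff_le]
  exact two_mul_sub_one_mul_one_sub_div_le (by linarith) (by linarith) (by linarith)
end
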